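/- arXiv:2505.13197 — 3 statements merged into one kernel-verified Lean document; each statement's English description precedes it below -/
import Mathlib

section
/- Let M be a symmetric positive definite real n × n matrix and Y an arbitrary real n × n matrix. Then X := ∫_{0}^{∞} exp(-M t) * Y * exp(-M t) dt is well-defined (the integral converges) and is the unique solution of the Lyapunov equation M X + X M = Y. -/
open MeasureTheory

attribute [local instance] Matrix.linftyOpNormedAddCommGroup Matrix.linftyOpNormedSpace
  Matrix.linftyOpNormedRing Matrix.linftyOpNormedAlgebra

open NormedSpace Filter Topology in
/-- For a symmetric positive definite `M` and arbitrary `Y`, the integral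
`X = ∫_0^∞ exp(-tM) Y exp(-tM) dt` converges and is the unique solution of the
Lyapunov equation `M X + X M = Y`. -/
theorem lyapunov_integral_solution {n : ℕ} (M Y : Matrix (Fin n) (Fin n) ℝ)
    (hM : M.PosDef) :
    @IntegrableOn ℝ (Matrix (Fin n) (Fin n) ℝ) _ _ SeminormedAddGroup.toContinuousENorm
      (fun t : ℝ => NormedSpace.exp (-(t • M)) * Y * NormedSpace.exp (-(t • M)))
      (Set.Ioi (0 : ℝ)) volume ∧
    (M * (∫ t in Set.Ioi (0 : ℝ),
        NormedSpace.exp (-(t • M)) * Y * NormedSpace.exp (-(t • M))) +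
      (∫ t in Set.Ioi (0 : ℝ),
        NormedSpace.exp (-(t • M)) * Y * NormedSpace.exp (-(t • M))) * M = Y) ∧
    (∀ X₁ X₂ : Matrix (Fin n) (Fin n) ℝ,
      M * X₁ + X₁ * M = Y → M * X₂ + X₂ * M = Y → X₁ = X₂) := by
  rcases isEmpty_or_nonempty (Fin n) with hn | hn
  · -- trivial case `n = 0`
    have hsub : ∀ A B : Matrix (Fin n) (Fin n) ℝ, A = B := fun A B => by
      ext i j; exact isEmptyElim i
    refine ⟨?_, hsub _ _, fun X₁ X₂ _ _ => hsub _ _⟩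
    have hz : (fun t : ℝ => exp (-(t • M)) * Y * exp (-(t • M)))
        = fun _ => (0 : Matrix (Fin n) (Fin n) ℝ) := funext fun t => hsub _ _
    rw [hz]
    exact integrableOn_zero
  · set E : ℝ → Matrix (Fin n) (Fin n) ℝ := fun t => exp (t • (-M)) with hE
    have hEeq : ∀ t : ℝ, exp (-(t • M)) = E t := fun t => by simp only [hE, smul_neg]
    -- spectral decomposition
    have hH := hM.1
    set U : Matrix (Fin n) (Fin n) ℝ := (hH.eigenvectorUnitary : Matrix (Fin n) (Fin n) ℝ) with hU
    have hspec : M = U * Matrix.diagonal hH.eigenvalues * star U := by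
      simpa using hH.spectral_theorem
    have hUstar : star U * U = 1 := Matrix.UnitaryGroup.star_mul_self hH.eigenvectorUnitary
    have hUinv : U⁻¹ = star U := Matrix.inv_eq_left_inv hUstar
    have hUunit : IsUnit U := ⟨⟨U, star U, mul_eq_one_comm.mpr hUstar, hUstar⟩, rfl⟩
    set μ : ℝ := Finset.univ.inf' Finset.univ_nonempty hH.eigenvalues with hμ
    have hμpos : 0 < μ := by
      obtain ⟨i, -, hi⟩ := Finset.exists_mem_eq_inf' Finset.univ_nonempty hH.eigenvalues
      rw [hμ, hi]; exact hM.eigenvalues_pos i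
    set C : ℝ := ‖U‖ * ‖star U‖ with hC
    have hC0 : 0 ≤ C := mul_nonneg (norm_nonneg _) (norm_nonneg _)
    -- norm bound on E
    have hEbound : ∀ t : ℝ, 0 ≤ t → ‖E t‖ ≤ C * Real.exp (-(μ * t)) := by
      intro t ht
      have hexp : E t = U * Matrix.diagonal (fun i => Real.exp (-(t * hH.eigenvalues i))) * star U := by
        have h1 : t • (-M) = U * Matrix.diagonal (fun i => -(t * hH.eigenvalues i)) * star U := by
          rw [smul_neg]
          conv_lhs => rw [hspec]
          have hD : Matrix.diagonal (fun i => -(t * hH.eigenvalues i))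
              = -(t • Matrix.diagonal hH.eigenvalues) := by
            rw [← Matrix.diagonal_smul, ← Matrix.diagonal_neg]
            rfl
          rw [hD, Matrix.mul_neg, Matrix.neg_mul, Matrix.mul_smul, Matrix.smul_mul]
        rw [hE]
        simp only
        rw [h1, ← hUinv, Matrix.exp_conj _ _ hUunit, hUinv, Matrix.exp_diagonal]
        congr 2
        rw [Pi.exp_def]
        funext i
        rw [← Real.exp_eq_exp_ℝ]
      rw [hexp]
      have hD : ‖Matrix.diagonal (fun i => Real.exp (-(t * hH.eigenvalues i)))‖
          ≤ Real.exp (-(μ * t)) := by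
        rw [Matrix.linfty_opNorm_diagonal]
        refine (pi_norm_le_iff_of_nonneg (Real.exp_pos _).le).2 fun i => ?_
        rw [Real.norm_eq_abs, abs_of_pos (Real.exp_pos _)]
        apply Real.exp_le_exp.2
        have : μ ≤ hH.eigenvalues i := Finset.inf'_le _ (Finset.mem_univ i)
        nlinarith
      calc ‖U * Matrix.diagonal (fun i => Real.exp (-(t * hH.eigenvalues i))) * star U‖
          ≤ ‖U‖ * ‖Matrix.diagonal (fun i => Real.exp (-(t * hH.eigenvalues i)))‖ * ‖star U‖ :=
            norm_mul₃_le
        _ ≤ ‖U‖ * Real.exp (-(μ * t)) * ‖star U‖ := by gcongr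
        _ = C * Real.exp (-(μ * t)) := by rw [hC]; ring
    have hEcont : Continuous E := exp_continuous.comp (continuous_id.smul continuous_const)
    have hcommE : ∀ t : ℝ, Commute M (E t) :=
      fun t => (((Commute.refl M).neg_right).smul_right t).exp_right
    -- generic statements for arbitrary middle matrix A
    have hbndA : ∀ (A : Matrix (Fin n) (Fin n) ℝ) (t : ℝ), 0 ≤ t →
        ‖E t * A * E t‖ ≤ (C * C * ‖A‖) * Real.exp (-(2 * μ) * t) := by
      intro A t ht
      have h1 := hEbound t ht
      have hne : 0 ≤ Real.exp (-(μ * t)) := (Real.exp_pos _).le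
      calc ‖E t * A * E t‖ ≤ ‖E t‖ * ‖A‖ * ‖E t‖ := norm_mul₃_le
        _ ≤ (C * Real.exp (-(μ * t))) * ‖A‖ * (C * Real.exp (-(μ * t))) := by
            gcongr
        _ = (C * C * ‖A‖) * (Real.exp (-(μ * t)) * Real.exp (-(μ * t))) := by ring
        _ = (C * C * ‖A‖) * Real.exp (-(2 * μ) * t) := by rw [← Real.exp_add]; ring_nf
    have htendA : ∀ A : Matrix (Fin n) (Fin n) ℝ,
        Tendsto (fun t => E t * A * E t) atTop (𝓝 0) := by
      intro A
      refine squeeze_zero_norm' (a := fun t => (C * C * ‖A‖) * Real.exp (-(2 * μ) * t)) ?_ ?_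
      · filter_upwards [eventually_ge_atTop (0:ℝ)] with t ht using hbndA A t ht
      · rw [show (0:ℝ) = (C * C * ‖A‖) * 0 by ring]
        apply Tendsto.const_mul
        exact Real.tendsto_exp_atBot.comp
          (Tendsto.const_mul_atTop_of_neg (by linarith) tendsto_id)
    have hderivA : ∀ (A : Matrix (Fin n) (Fin n) ℝ) (t : ℝ),
        HasDerivAt (fun u => E u * A * E u)
          (-(M * (E t * A * E t) + (E t * A * E t) * M)) t := by
      intro A t
      have hEdt : HasDerivAt E (E t * (-M)) t := hasDerivAt_exp_smul_const (-M) t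
      have hd := (hEdt.mul_const A).mul hEdt
      have hc : M * E t = E t * M := (hcommE t).eq
      have e1 : E t * -M * A * E t = -(M * (E t * A * E t)) := by
        rw [Matrix.mul_neg, ← hc, Matrix.neg_mul, Matrix.neg_mul,
          Matrix.mul_assoc M (E t) A, Matrix.mul_assoc M (E t * A) (E t)]
      have e2 : E t * A * (E t * -M) = -((E t * A * E t) * M) := by
        rw [Matrix.mul_neg, Matrix.mul_neg, ← Matrix.mul_assoc]
      rw [e1, e2, ← neg_add] at hd
      exact hd
    have hcontA : ∀ A : Matrix (Fin n) (Fin n) ℝ,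
        Continuous (fun t => E t * A * E t) :=
      fun A => (hEcont.mul continuous_const).mul hEcont
    -- part 1 : integrability
    have hint : @IntegrableOn ℝ (Matrix (Fin n) (Fin n) ℝ) _ _ SeminormedAddGroup.toContinuousENorm (fun t => E t * Y * E t) (Set.Ioi (0:ℝ)) volume := by
      apply Integrable.mono' (((exp_neg_integrableOn_Ioi 0 (by linarith : (0:ℝ) < 2*μ))).const_mul
        (C * C * ‖Y‖))
      · haveI : TopologicalSpace.PseudoMetrizableSpace (Matrix (Fin n) (Fin n) ℝ) :=
          TopologicalSpace.pseudoMetrizableSpace_pi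
        exact (hcontA Y).aestronglyMeasurable.restrict
      · refine (ae_restrict_iff' measurableSet_Ioi).2 (ae_of_all _ fun t ht => ?_)
        have := hbndA Y t (le_of_lt ht)
        simpa [neg_mul] using this
    -- the integrand in the statement equals our function
    have hfun : (fun t : ℝ => exp (-(t • M)) * Y * exp (-(t • M)))
        = fun t => E t * Y * E t := funext fun t => by rw [hEeq]
    -- part 2 : solves the Lyapunov equation
    have hintM : @IntegrableOn ℝ (Matrix (Fin n) (Fin n) ℝ) _ _ SeminormedAddGroup.toContinuousENorm (fun t => M * (E t * Y * E t)) (Set.Ioi (0:ℝ)) volume :=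
      hint.const_mul M
    have hintM' : @IntegrableOn ℝ (Matrix (Fin n) (Fin n) ℝ) _ _ SeminormedAddGroup.toContinuousENorm (fun t => (E t * Y * E t) * M) (Set.Ioi (0:ℝ)) volume :=
      hint.mul_const M
    have hkey := integral_Ioi_of_hasDerivAt_of_tendsto (a := 0)
      (f := fun t => E t * Y * E t)
      (f' := fun t => -(M * (E t * Y * E t) + (E t * Y * E t) * M))
      ((hcontA Y).continuousWithinAt)
      (fun x _ => hderivA Y x) ((hintM.add hintM').neg) (htendA Y)
    have hE0 : E 0 = 1 := by rw [hE]; simp [exp_zero]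
    have hf0 : E 0 * Y * E 0 = Y := by rw [hE0, Matrix.one_mul, Matrix.mul_one]
    simp only [integral_neg, zero_sub, neg_inj, hf0] at hkey
    -- pull M in/out of the integral
    have hlhs : M * (∫ t in Set.Ioi (0:ℝ), E t * Y * E t)
          + (∫ t in Set.Ioi (0:ℝ), E t * Y * E t) * M = Y := by
      have h1 : M * (∫ t in Set.Ioi (0:ℝ), E t * Y * E t)
          = ∫ t in Set.Ioi (0:ℝ), M * (E t * Y * E t) :=
        ((ContinuousLinearMap.mul ℝ (Matrix (Fin n) (Fin n) ℝ) M).integral_comp_comm hint).symm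
      have h2 : (∫ t in Set.Ioi (0:ℝ), E t * Y * E t) * M
          = ∫ t in Set.Ioi (0:ℝ), (E t * Y * E t) * M :=
        (((ContinuousLinearMap.mul ℝ (Matrix (Fin n) (Fin n) ℝ)).flip M).integral_comp_comm
          hint).symm
      rw [h1, h2, ← integral_add hintM hintM', hkey]
    refine ⟨by rw [hfun]; exact hint, by rw [hfun]; exact hlhs, ?_⟩
    -- part 3 : uniqueness
    intro X₁ X₂ h₁ h₂
    set D := X₁ - X₂ with hD
    have hDeq : M * D + D * M = 0 := by
      have : M * D + D * M = (M * X₁ + X₁ * M) - (M * X₂ + X₂ * M) := by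
        rw [hD]; noncomm_ring
      rw [this, h₁, h₂, sub_self]
    have hzero : ∀ t : ℝ, HasDerivAt (fun u => E u * D * E u) 0 t := by
      intro t
      have hd := hderivA D t
      have hc : M * E t = E t * M := (hcommE t).eq
      have e1 : M * (E t * D * E t) = E t * (M * D) * E t := by
        rw [← Matrix.mul_assoc, ← Matrix.mul_assoc, hc, Matrix.mul_assoc (E t) M D]
      have e2 : (E t * D * E t) * M = E t * (D * M) * E t := by
        rw [Matrix.mul_assoc (E t * D) (E t) M, ← hc, ← Matrix.mul_assoc (E t * D) M (E t),
          Matrix.mul_assoc (E t) D M]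
      rw [e1, e2, ← Matrix.add_mul, ← Matrix.mul_add, hDeq, Matrix.mul_zero, Matrix.zero_mul,
        neg_zero] at hd
      exact hd
    have hconst : ∀ t : ℝ, E t * D * E t = E 0 * D * E 0 :=
      fun t => is_const_of_deriv_eq_zero (fun u => (hzero u).differentiableAt)
        (fun u => (hzero u).deriv) t 0
    have hDlim : Tendsto (fun _ : ℝ => D) atTop (𝓝 (0 : Matrix (Fin n) (Fin n) ℝ)) := by
      have : (fun t : ℝ => E t * D * E t) = fun _ => D := by
        funext t; rw [hconst t, hE0, Matrix.one_mul, Matrix.mul_one]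
      rw [← this]
      exact htendA D
    have : D = 0 := tendsto_nhds_unique tendsto_const_nhds hDlim
    exact sub_eq_zero.mp this
end

section
/- Let A, D, Γ : ℝ → Matrix (Fin d) (Fin d) ℝ be continuous, with D t symmetric positive semidefinite and Γ t symmetric negative semidefinite for all t ≥ 0. If G : ℝ → Matrix (Fin d) (Fin d) ℝ is symmetric, satisfies G 0 is negative semidefinite, and solves the matrix Riccati ODE G' t = Γ t + 2 G t * D t * G t - (A t)ᵀ * G t - G t * A t on [0, T], then G t is negative semidefinite for all t ∈ [0, T]. -/
open Matrix

attribute [local instance] Matrix.linftyOpNormedAddCommGroup Matrix.linftyOpNormedSpace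
  Matrix.linftyOpNormedRing Matrix.linftyOpNormedAlgebra

namespace RiccatiAux

variable {d : ℕ}

/-- quadratic form of a matrix at a vector -/
noncomputable def Q (M : Matrix (Fin d) (Fin d) ℝ) (u : Fin d → ℝ) : ℝ :=
  u ⬝ᵥ M.mulVec u

/-- a convenient bound constant: `√d * ‖M‖` (linfty operator norm). -/
noncomputable def B (M : Matrix (Fin d) (Fin d) ℝ) : ℝ :=
  Real.sqrt d * ‖M‖

lemma B_nonneg (M : Matrix (Fin d) (Fin d) ℝ) : 0 ≤ B M :=
  mul_nonneg (Real.sqrt_nonneg _) (norm_nonneg _)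

lemma dot_self_nonneg (u : Fin d → ℝ) : 0 ≤ u ⬝ᵥ u :=
  Finset.sum_nonneg fun _ _ => mul_self_nonneg _

lemma dot_CS (u v : Fin d → ℝ) :
    |u ⬝ᵥ v| ≤ Real.sqrt (u ⬝ᵥ u) * Real.sqrt (v ⬝ᵥ v) := by
  have h := Finset.sum_mul_sq_le_sq_mul_sq Finset.univ u v
  have h1 : (u ⬝ᵥ v) ^ 2 ≤ (u ⬝ᵥ u) * (v ⬝ᵥ v) := by
    simpa [dotProduct, pow_two] using h
  have := Real.sqrt_le_sqrt h1
  rwa [Real.sqrt_sq_eq_abs, Real.sqrt_mul (dot_self_nonneg u)] at this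

lemma norm_inf_sq_le_dot (u : Fin d → ℝ) : ‖u‖ ^ 2 ≤ u ⬝ᵥ u := by
  have h : ‖u‖ ≤ Real.sqrt (u ⬝ᵥ u) := by
    apply pi_norm_le_iff_of_nonneg (Real.sqrt_nonneg _) |>.2
    intro i
    have : u i ^ 2 ≤ u ⬝ᵥ u := by
      have := Finset.single_le_sum (f := fun j => u j * u j)
        (fun j _ => mul_self_nonneg (u j)) (Finset.mem_univ i)
      simpa [dotProduct, pow_two] using this
    calc ‖u i‖ = Real.sqrt (u i ^ 2) := by
          rw [Real.sqrt_sq_eq_abs]; rfl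
      _ ≤ Real.sqrt (u ⬝ᵥ u) := Real.sqrt_le_sqrt this
  calc ‖u‖ ^ 2 ≤ Real.sqrt (u ⬝ᵥ u) ^ 2 := by
        apply pow_le_pow_left₀ (norm_nonneg _) h
    _ = u ⬝ᵥ u := Real.sq_sqrt (dot_self_nonneg u)

lemma mulVec_dot_le (M : Matrix (Fin d) (Fin d) ℝ) (u : Fin d → ℝ) :
    (M.mulVec u) ⬝ᵥ (M.mulVec u) ≤ B M ^ 2 * (u ⬝ᵥ u) := by
  have h1 : (M.mulVec u) ⬝ᵥ (M.mulVec u) ≤ (d : ℝ) * ‖M.mulVec u‖ ^ 2 := by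
    have hb : ∀ i : Fin d, M.mulVec u i * M.mulVec u i ≤ ‖M.mulVec u‖ ^ 2 := by
      intro i
      have := norm_le_pi_norm (M.mulVec u) i
      calc M.mulVec u i * M.mulVec u i = ‖M.mulVec u i‖ ^ 2 := by
            rw [pow_two]; simp [Real.norm_eq_abs, abs_mul_abs_self]
        _ ≤ ‖M.mulVec u‖ ^ 2 := by
            apply pow_le_pow_left₀ (norm_nonneg _) this
    calc (M.mulVec u) ⬝ᵥ (M.mulVec u) ≤ ∑ _i : Fin d, ‖M.mulVec u‖ ^ 2 :=
          Finset.sum_le_sum fun i _ => hb i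
      _ = (d : ℝ) * ‖M.mulVec u‖ ^ 2 := by simp [Finset.sum_const, mul_comm]
  have h2 : ‖M.mulVec u‖ ^ 2 ≤ (‖M‖ * ‖u‖) ^ 2 :=
    pow_le_pow_left₀ (norm_nonneg _) (Matrix.linfty_opNorm_mulVec M u) 2
  have h3 : ‖u‖ ^ 2 ≤ u ⬝ᵥ u := norm_inf_sq_le_dot u
  have hd : (0:ℝ) ≤ d := Nat.cast_nonneg d
  calc (M.mulVec u) ⬝ᵥ (M.mulVec u) ≤ (d : ℝ) * ((‖M‖ * ‖u‖) ^ 2) :=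
        le_trans h1 (by nlinarith [norm_nonneg (M.mulVec u)])
    _ = B M ^ 2 * ‖u‖ ^ 2 := by
        rw [B]; rw [mul_pow, mul_pow, Real.sq_sqrt hd]; ring
    _ ≤ B M ^ 2 * (u ⬝ᵥ u) := by
        apply mul_le_mul_of_nonneg_left h3 (sq_nonneg _)

/-- symmetric matrices can be moved across the dot product -/
lemma symm_dot_move {M : Matrix (Fin d) (Fin d) ℝ} (hM : Mᵀ = M) (u v : Fin d → ℝ) :
    u ⬝ᵥ M.mulVec v = (M.mulVec u) ⬝ᵥ v := by
  rw [Matrix.dotProduct_mulVec, ← Matrix.mulVec_transpose, hM]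

lemma transpose_dot_move (M : Matrix (Fin d) (Fin d) ℝ) (u v : Fin d → ℝ) :
    u ⬝ᵥ Mᵀ.mulVec v = (M.mulVec u) ⬝ᵥ v := by
  rw [Matrix.dotProduct_mulVec, Matrix.vecMul_transpose]

/-- real PosSemidef gives symmetry -/
lemma psd_symm {M : Matrix (Fin d) (Fin d) ℝ} (hM : M.PosSemidef) : Mᵀ = M := by
  have := hM.1
  rwa [Matrix.IsHermitian, Matrix.conjTranspose_eq_transpose_of_trivial] at this

lemma psd_dot_nonneg {M : Matrix (Fin d) (Fin d) ℝ} (hM : M.PosSemidef) (u : Fin d → ℝ) :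
    0 ≤ u ⬝ᵥ M.mulVec u := by
  have := hM.dotProduct_mulVec_nonneg u
  simpa using this

/-- scaling lemma: nonneg on the dot-sphere implies nonneg everywhere -/
lemma nonneg_of_sphere (M : Matrix (Fin d) (Fin d) ℝ)
    (h : ∀ u : Fin d → ℝ, u ⬝ᵥ u = 1 → 0 ≤ u ⬝ᵥ M.mulVec u) (v : Fin d → ℝ) :
    0 ≤ v ⬝ᵥ M.mulVec v := by
  rcases eq_or_ne v 0 with rfl | hv
  · simp
  · have hvv : 0 < v ⬝ᵥ v := by
      rcases Function.ne_iff.1 hv with ⟨i, hi⟩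
      have : 0 < v i * v i := mul_self_pos.2 hi
      apply Finset.sum_pos' (fun j _ => mul_self_nonneg _) ⟨i, Finset.mem_univ i, this⟩
    set n : ℝ := Real.sqrt (v ⬝ᵥ v) with hn
    have hnpos : 0 < n := Real.sqrt_pos.2 hvv
    have hu : (n⁻¹ • v) ⬝ᵥ (n⁻¹ • v) = 1 := by
      rw [smul_dotProduct, dotProduct_smul, smul_eq_mul, smul_eq_mul]
      have hmul : n * n = v ⬝ᵥ v := Real.mul_self_sqrt hvv.le
      field_simp
      linarith [hmul]
    have := h _ hu
    rw [smul_dotProduct, Matrix.mulVec_smul, dotProduct_smul] at this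
    have h2 : (0:ℝ) ≤ n⁻¹ * (n⁻¹ * (v ⬝ᵥ M.mulVec v)) := by
      simpa [smul_eq_mul] using this
    by_contra hneg
    push_neg at hneg
    have hlt : n⁻¹ * (n⁻¹ * (v ⬝ᵥ M.mulVec v)) < 0 :=
      mul_neg_of_pos_of_neg (inv_pos.2 hnpos)
        (mul_neg_of_pos_of_neg (inv_pos.2 hnpos) hneg)
    linarith

/-- key: for PSD `P`, `‖P u‖² ≤ B P * (u ⬝ P u)`. -/
lemma psd_sq_le {P : Matrix (Fin d) (Fin d) ℝ} (hP : P.PosSemidef) (u : Fin d → ℝ) :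
    (P.mulVec u) ⬝ᵥ (P.mulVec u) ≤ B P * (u ⬝ᵥ P.mulVec u) := by
  obtain ⟨S, hSnn, hSS⟩ : ∃ S : Matrix (Fin d) (Fin d) ℝ, S.PosSemidef ∧ S * S = P := by
    open scoped MatrixOrder in
    exact ⟨CFC.sqrt P, (CFC.sqrt_nonneg P).posSemidef, CFC.sqrt_mul_sqrt_self P hP.nonneg⟩
  have hSsym : Sᵀ = S := psd_symm hSnn
  set w := S.mulVec u with hw
  have hPu : P.mulVec u = S.mulVec w := by
    rw [hw, Matrix.mulVec_mulVec, hSS]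
  have e1 : (P.mulVec u) ⬝ᵥ (P.mulVec u) = w ⬝ᵥ P.mulVec w := by
    rw [hPu, symm_dot_move hSsym, Matrix.mulVec_mulVec, hSS, symm_dot_move (psd_symm hP)]
  have e2 : w ⬝ᵥ w = u ⬝ᵥ P.mulVec u := by
    rw [hw, symm_dot_move hSsym, Matrix.mulVec_mulVec, hSS]
    exact dotProduct_comm _ _
  rw [e1]
  have hcs := dot_CS w (P.mulVec w)
  have h1 : w ⬝ᵥ P.mulVec w ≤ Real.sqrt (w ⬝ᵥ w) * Real.sqrt ((P.mulVec w) ⬝ᵥ (P.mulVec w)) :=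
    le_trans (le_abs_self _) hcs
  have h2 : Real.sqrt ((P.mulVec w) ⬝ᵥ (P.mulVec w)) ≤ B P * Real.sqrt (w ⬝ᵥ w) := by
    have := Real.sqrt_le_sqrt (mulVec_dot_le P w)
    calc Real.sqrt ((P.mulVec w) ⬝ᵥ (P.mulVec w)) ≤ Real.sqrt (B P ^ 2 * (w ⬝ᵥ w)) := this
      _ = B P * Real.sqrt (w ⬝ᵥ w) := by
          rw [Real.sqrt_mul (sq_nonneg _), Real.sqrt_sq (B_nonneg P)]
  have h3 : Real.sqrt (w ⬝ᵥ w) * Real.sqrt (w ⬝ᵥ w) = w ⬝ᵥ w :=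
    Real.mul_self_sqrt (dot_self_nonneg w)
  calc w ⬝ᵥ P.mulVec w
      ≤ Real.sqrt (w ⬝ᵥ w) * Real.sqrt ((P.mulVec w) ⬝ᵥ (P.mulVec w)) := h1
    _ ≤ Real.sqrt (w ⬝ᵥ w) * (B P * Real.sqrt (w ⬝ᵥ w)) :=
        mul_le_mul_of_nonneg_left h2 (Real.sqrt_nonneg _)
    _ = B P * (Real.sqrt (w ⬝ᵥ w) * Real.sqrt (w ⬝ᵥ w)) := by ring
    _ = B P * (w ⬝ᵥ w) := by rw [h3]
    _ = B P * (u ⬝ᵥ P.mulVec u) := by rw [e2]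

/-- the dot-product unit sphere -/
def sph (d : ℕ) : Set (Fin d → ℝ) := {u | u ⬝ᵥ u = 1}

lemma Q_abs_le {M : Matrix (Fin d) (Fin d) ℝ} {u : Fin d → ℝ} (hu : u ∈ sph d) :
    |Q M u| ≤ B M := by
  have hcs := dot_CS u (M.mulVec u)
  have h2 : Real.sqrt ((M.mulVec u) ⬝ᵥ (M.mulVec u)) ≤ B M := by
    have := Real.sqrt_le_sqrt (mulVec_dot_le M u)
    rw [hu, mul_one] at this
    calc Real.sqrt ((M.mulVec u) ⬝ᵥ (M.mulVec u)) ≤ Real.sqrt (B M ^ 2) := this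
      _ = B M := Real.sqrt_sq (B_nonneg M)
  calc |Q M u| ≤ Real.sqrt (u ⬝ᵥ u) * Real.sqrt ((M.mulVec u) ⬝ᵥ (M.mulVec u)) := hcs
    _ = Real.sqrt ((M.mulVec u) ⬝ᵥ (M.mulVec u)) := by rw [hu]; simp
    _ ≤ B M := h2

lemma sph_compact : IsCompact (sph d) := by
  have hcont : Continuous fun u : Fin d → ℝ => u ⬝ᵥ u := by
    unfold dotProduct
    exact continuous_finset_sum _ fun i _ => (continuous_apply i).mul (continuous_apply i)
  have hclosed : IsClosed (sph d) := isClosed_eq hcont continuous_const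
  apply (isCompact_closedBall (0 : Fin d → ℝ) 1).of_isClosed_subset hclosed
  intro u hu
  simp only [Metric.mem_closedBall, dist_zero_right]
  have h1 : ‖u‖ ^ 2 ≤ 1 := by
    have := norm_inf_sq_le_dot u
    rw [hu] at this; exact this
  nlinarith [norm_nonneg u]

lemma sph_nonempty (hd : d ≠ 0) : (sph d).Nonempty := by
  refine ⟨Pi.single ⟨0, Nat.pos_of_ne_zero hd⟩ 1, ?_⟩
  simp only [sph, Set.mem_setOf_eq, dotProduct]
  rw [Finset.sum_eq_single (⟨0, Nat.pos_of_ne_zero hd⟩ : Fin d)]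
  · simp
  · intro j _ hj; simp [Pi.single_apply, hj]
  · intro h; exact absurd (Finset.mem_univ _) h

lemma Q_continuous (M : Matrix (Fin d) (Fin d) ℝ) : Continuous (Q M) := by
  unfold Q dotProduct Matrix.mulVec
  refine continuous_finset_sum _ fun i _ => (continuous_apply i).mul ?_
  exact continuous_finset_sum _ fun j _ => continuous_const.mul (continuous_apply j)

/-- the largest "eigenvalue": sup of the quadratic form over the sphere -/
noncomputable def lam (M : Matrix (Fin d) (Fin d) ℝ) : ℝ :=
  sSup (Q M '' sph d)

lemma lam_isGreatest (hd : d ≠ 0) (M : Matrix (Fin d) (Fin d) ℝ) :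
    IsGreatest (Q M '' sph d) (lam M) := by
  obtain ⟨u, hu, hmax⟩ :=
    sph_compact.exists_isMaxOn (sph_nonempty hd) (Q_continuous M).continuousOn
  have hg : IsGreatest (Q M '' sph d) (Q M u) := by
    constructor
    · exact Set.mem_image_of_mem _ hu
    · rintro y ⟨v, hv, rfl⟩
      exact hmax hv
  rw [lam, hg.csSup_eq]
  exact hg

lemma lam_ge (hd : d ≠ 0) {M : Matrix (Fin d) (Fin d) ℝ} {u : Fin d → ℝ} (hu : u ∈ sph d) :
    Q M u ≤ lam M :=
  (lam_isGreatest hd M).2 (Set.mem_image_of_mem _ hu)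

lemma lam_exists (hd : d ≠ 0) (M : Matrix (Fin d) (Fin d) ℝ) :
    ∃ u ∈ sph d, Q M u = lam M := by
  obtain ⟨u, hu, hQ⟩ := (lam_isGreatest hd M).1
  exact ⟨u, hu, hQ⟩

lemma Q_sub (M N : Matrix (Fin d) (Fin d) ℝ) (u : Fin d → ℝ) :
    Q (M - N) u = Q M u - Q N u := by
  unfold Q
  rw [Matrix.sub_mulVec, dotProduct_sub]

lemma lam_sub_le (hd : d ≠ 0) (M N : Matrix (Fin d) (Fin d) ℝ) :
    lam M - lam N ≤ B (M - N) := by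
  obtain ⟨u, hu, hQ⟩ := lam_exists hd M
  have h1 : Q M u = Q N u + Q (M - N) u := by rw [Q_sub]; ring
  have h2 : Q N u ≤ lam N := lam_ge hd hu
  have h3 : Q (M - N) u ≤ B (M - N) := le_trans (le_abs_self _) (Q_abs_le hu)
  linarith [hQ.symm.le, hQ.le, h1.le]

lemma abs_lam_sub_le (hd : d ≠ 0) (M N : Matrix (Fin d) (Fin d) ℝ) :
    |lam M - lam N| ≤ B (M - N) := by
  rcases abs_cases (lam M - lam N) with ⟨h, _⟩ | ⟨h, _⟩
  · rw [h]; exact lam_sub_le hd M N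
  · rw [h]
    have := lam_sub_le hd N M
    have hB : B (N - M) = B (M - N) := by
      unfold B; rw [show N - M = -(M - N) from (neg_sub M N).symm, norm_neg]
    linarith

lemma combine_bound {CA CD mv s0 ε qΓ qD qA1 qA2 : ℝ}
    (hCA0 : 0 ≤ CA) (hCD0 : 0 ≤ CD) (hm0 : 0 ≤ mv) (hm1 : mv ≤ 1)
    (hs0 : 0 ≤ s0) (hs1 : s0 ≤ 1)
    (hsε : s0 * (6 * CD + 2 * CA + 1) ≤ ε / 2)
    (hΓ : qΓ ≤ 0) (hD : qD ≤ CD * (mv + s0) ^ 2)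
    (hA1 : -(CA * (mv + s0)) ≤ qA1) (hA2 : -(CA * (mv + s0)) ≤ qA2) :
    qΓ + 2 * qD - qA1 - qA2 ≤ (2 * CD + 2 * CA + 1) * mv + ε / 2 := by
  have h1 : (mv + s0) ^ 2 ≤ mv + 3 * s0 := by
    nlinarith [mul_nonneg hm0 (sub_nonneg.2 hm1), mul_nonneg hs0 (sub_nonneg.2 hs1),
      mul_nonneg hs0 (sub_nonneg.2 hm1)]
  have h2 : CD * (mv + s0) ^ 2 ≤ CD * (mv + 3 * s0) := mul_le_mul_of_nonneg_left h1 hCD0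
  nlinarith [h2, hsε, mul_nonneg hCD0 hm0, mul_nonneg hCA0 hm0, mul_nonneg hCD0 hs0,
    mul_nonneg hCA0 hs0, hm0, hs0]

lemma dot_sub_expand (a b : Fin d → ℝ) :
    (a - b) ⬝ᵥ (a - b) = a ⬝ᵥ a - 2 * (a ⬝ᵥ b) + b ⬝ᵥ b := by
  rw [sub_dotProduct, dotProduct_sub, dotProduct_sub,
    dotProduct_comm b a]
  ring

lemma Q_smul (r : ℝ) (M : Matrix (Fin d) (Fin d) ℝ) (u : Fin d → ℝ) :
    Q (r • M) u = r * Q M u := by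
  unfold Q
  rw [Matrix.smul_mulVec, dotProduct_smul, smul_eq_mul]

lemma Q_add (M N : Matrix (Fin d) (Fin d) ℝ) (u : Fin d → ℝ) :
    Q (M + N) u = Q M u + Q N u := by
  unfold Q
  rw [Matrix.add_mulVec, dotProduct_add]

lemma Q_neg_nonpos {M : Matrix (Fin d) (Fin d) ℝ} (hM : (-M).PosSemidef) (u : Fin d → ℝ) :
    Q M u ≤ 0 := by
  have := psd_dot_nonneg hM u
  rw [Matrix.neg_mulVec, dotProduct_neg] at this
  unfold Q
  linarith

end RiccatiAux

open RiccatiAux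

set_option maxHeartbeats 1000000 in
/-- Preservation of the negative semidefinite cone along the matrix Riccati flow
`G' = Γ + 2 G D G - Aᵀ G - G A` when `D t` is positive semidefinite and `Γ t` is
negative semidefinite. -/
theorem riccati_preserves_nsd {d : ℕ} (T : ℝ) (hT : 0 ≤ T)
    (A D Γ G : ℝ → Matrix (Fin d) (Fin d) ℝ)
    (hA : Continuous A) (hD : Continuous D) (hΓ : Continuous Γ)
    (hDpsd : ∀ t, 0 ≤ t → (D t).PosSemidef)
    (hΓnsd : ∀ t, 0 ≤ t → (-(Γ t)).PosSemidef)
    (hGsymm : ∀ t, (G t).IsSymm)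
    (hG0 : (-(G 0)).PosSemidef)
    (hGode : ∀ t ∈ Set.Icc 0 T,
      HasDerivAt G (Γ t + 2 • (G t * D t * G t) - (A t)ᵀ * G t - G t * A t) t) :
    ∀ t ∈ Set.Icc 0 T, (-(G t)).PosSemidef := by
  classical
  rcases Nat.eq_zero_or_pos d with hd0 | hdpos
  · subst hd0
    intro t _
    refine Matrix.PosSemidef.of_dotProduct_mulVec_nonneg ?_ ?_
    · exact Subsingleton.elim _ _
    · intro x
      simp [dotProduct]
  have hd : d ≠ 0 := Nat.pos_iff_ne_zero.1 hdpos
  -- the top "eigenvalue" function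
  set m : ℝ → ℝ := fun t => lam (G t) with hm_def
  have hmQ : ∀ t, ∀ u ∈ sph d, Q (G t) u ≤ m t := fun t u hu => lam_ge hd hu
  have habs : ∀ z t : ℝ, |m z - m t| ≤ Real.sqrt d * ‖G z - G t‖ := by
    intro z t
    have := abs_lam_sub_le hd (G z) (G t)
    rwa [B] at this
  have hGcont : ∀ t ∈ Set.Icc (0:ℝ) T, ContinuousAt G t :=
    fun t ht => (hGode t ht).continuousAt
  have hm_cont : ∀ t ∈ Set.Icc (0:ℝ) T, ContinuousAt m t := by
    intro t ht
    have h0 : Filter.Tendsto (fun z => Real.sqrt d * ‖G z - G t‖) (nhds t) (nhds 0) := by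
      have h1 : Filter.Tendsto (fun z => G z - G t) (nhds t) (nhds 0) := by
        have h2 : Filter.Tendsto G (nhds t) (nhds (G t)) := hGcont t ht
        have := h2.sub (tendsto_const_nhds (x := G t))
        simpa using this
      have := h1.norm
      rw [norm_zero] at this
      simpa using this.const_mul (Real.sqrt d)
    apply tendsto_iff_dist_tendsto_zero.2
    apply squeeze_zero (fun z => dist_nonneg) (fun z => ?_) h0
    rw [Real.dist_eq]
    exact habs z t
  have hm0 : m 0 ≤ 0 := by
    obtain ⟨u, hu, hQ⟩ := lam_exists hd (G 0)
    rw [hm_def]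
    simp only []
    rw [← hQ]
    exact Q_neg_nonpos hG0 u
  -- reduction to `m ≤ 0`
  suffices hms : ∀ t ∈ Set.Icc 0 T, m t ≤ 0 by
    intro t ht
    refine Matrix.PosSemidef.of_dotProduct_mulVec_nonneg ?_ ?_
    · rw [Matrix.IsHermitian, Matrix.conjTranspose_eq_transpose_of_trivial,
        Matrix.transpose_neg, (hGsymm t)]
    · intro x
      have hx : 0 ≤ x ⬝ᵥ (-(G t)).mulVec x := by
        have hgen := nonneg_of_sphere (-(G t)) (fun u hu => ?_) x
        · exact hgen
        · have h1 : Q (G t) u ≤ 0 := le_trans (hmQ t u hu) (hms t ht)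
          rw [Matrix.neg_mulVec, dotProduct_neg]
          unfold Q at h1
          linarith
      simpa using hx
  -- main argument by contradiction
  by_contra hcon
  push_neg at hcon
  obtain ⟨t1, ht1, hmt1⟩ := hcon
  have ht1T : t1 ≤ T := ht1.2
  have ht1pos : 0 ≤ t1 := ht1.1
  set SS : Set ℝ := {s | s ∈ Set.Icc 0 t1 ∧ m s ≤ 0} with hSS_def
  have hSSne : SS.Nonempty := ⟨0, ⟨le_refl 0, ht1pos⟩, hm0⟩
  have hSSbdd : BddAbove SS := ⟨t1, fun s hs => hs.1.2⟩
  set t0 : ℝ := sSup SS with ht0_def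
  have ht00 : 0 ≤ t0 := le_csSup hSSbdd ⟨⟨le_refl 0, ht1pos⟩, hm0⟩
  have ht0t1 : t0 ≤ t1 := csSup_le hSSne fun s hs => hs.1.2
  have ht0T : t0 ≤ T := le_trans ht0t1 ht1T
  have ht0I : t0 ∈ Set.Icc (0:ℝ) T := ⟨ht00, ht0T⟩
  have hmt0 : m t0 ≤ 0 := by
    obtain ⟨x, hmono, hx_tendsto, hx_mem⟩ := exists_seq_tendsto_sSup hSSne hSSbdd
    have hcont : Filter.Tendsto (fun n => m (x n)) Filter.atTop (nhds (m t0)) :=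
      ((hm_cont t0 ht0I).tendsto).comp hx_tendsto
    exact le_of_tendsto hcont (Filter.Eventually.of_forall fun n => (hx_mem n).2)
  have ht0lt : t0 < t1 := by
    rcases lt_or_eq_of_le ht0t1 with h | h
    · exact h
    · exfalso; rw [h] at hmt0; linarith
  have hpos_after : ∀ s, t0 < s → s ≤ t1 → 0 < m s := by
    intro s hs1 hs2
    by_contra hle
    push_neg at hle
    have : s ∈ SS := ⟨⟨le_trans ht00 hs1.le, hs2⟩, hle⟩
    exact absurd (le_csSup hSSbdd this) (not_le.2 hs1)
  have hmt0' : m t0 = 0 := by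
    refine le_antisymm hmt0 ?_
    have htd : Filter.Tendsto m (nhdsWithin t0 (Set.Ioc t0 t1)) (nhds (m t0)) :=
      ((hm_cont t0 ht0I).tendsto).mono_left nhdsWithin_le_nhds
    have hne : (nhdsWithin t0 (Set.Ioc t0 t1)).NeBot := by
      apply IsGLB.nhdsWithin_neBot
      · exact isGLB_Ioc ht0lt
      · exact Set.nonempty_Ioc.2 ht0lt
    refine ge_of_tendsto htd ?_
    filter_upwards [self_mem_nhdsWithin] with s hs
    exact (hpos_after s hs.1 hs.2).le
  -- pick t1' close to t0 where m ≤ 1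
  obtain ⟨η, hη, hη2⟩ : ∃ η > 0, ∀ s, |s - t0| < η → m s ≤ 1 := by
    have := (hm_cont t0 ht0I).tendsto
    have h1 : ∀ᶠ s in nhds t0, m s < 1 := by
      apply Filter.Tendsto.eventually_lt_const _ this
      rw [hmt0']; norm_num
    rw [Metric.eventually_nhds_iff] at h1
    obtain ⟨η, hη, hball⟩ := h1
    exact ⟨η, hη, fun s hs => (hball (by rwa [Real.dist_eq])).le⟩
  set t1' : ℝ := min t1 (t0 + η / 2) with ht1'_def
  have ht1'gt : t0 < t1' := lt_min ht0lt (by linarith)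
  have ht1'le : t1' ≤ t1 := min_le_left _ _
  have ht1'T : t1' ≤ T := le_trans ht1'le ht1T
  have hsmall : ∀ s ∈ Set.Icc t0 t1', m s ≤ 1 := by
    intro s hs
    apply hη2
    rw [abs_lt]
    constructor
    · linarith [hs.1]
    · have := hs.2
      have h2 : t1' ≤ t0 + η / 2 := min_le_right _ _
      linarith
  have hmt1' : 0 < m t1' := hpos_after t1' ht1'gt ht1'le
  -- constants
  obtain ⟨tA, _, hCA⟩ := (isCompact_Icc (a := (0:ℝ)) (b := T)).exists_isMaxOn
    ⟨0, Set.left_mem_Icc.2 hT⟩ ((continuous_const.mul hA.norm).continuousOn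
      (f := fun t => Real.sqrt d * ‖A t‖))
  set CA : ℝ := Real.sqrt d * ‖A tA‖ with hCA_def
  have hCA0 : 0 ≤ CA := mul_nonneg (Real.sqrt_nonneg _) (norm_nonneg _)
  obtain ⟨tD, _, hCD⟩ := (isCompact_Icc (a := (0:ℝ)) (b := T)).exists_isMaxOn
    ⟨0, Set.left_mem_Icc.2 hT⟩ ((continuous_const.mul hD.norm).continuousOn
      (f := fun t => Real.sqrt d * ‖D t‖))
  set CD : ℝ := Real.sqrt d * ‖D tD‖ with hCD_def
  have hCD0 : 0 ≤ CD := mul_nonneg (Real.sqrt_nonneg _) (norm_nonneg _)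
  have hGconton : ContinuousOn (fun t => Real.sqrt d * ‖G t‖) (Set.Icc 0 T) := by
    apply ContinuousOn.mul continuousOn_const
    exact ContinuousOn.norm (fun t ht => (hGcont t ht).continuousWithinAt)
  obtain ⟨tG, _, hCG⟩ := (isCompact_Icc (a := (0:ℝ)) (b := T)).exists_isMaxOn
    ⟨0, Set.left_mem_Icc.2 hT⟩ hGconton
  set CG : ℝ := Real.sqrt d * ‖G tG‖ with hCG_def
  have hCG0 : 0 ≤ CG := mul_nonneg (Real.sqrt_nonneg _) (norm_nonneg _)
  set c : ℝ := Real.sqrt d * ‖(1 : Matrix (Fin d) (Fin d) ℝ)‖ + CG + 1 with hc_def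
  have hc1 : 1 ≤ c := by
    have : 0 ≤ Real.sqrt d * ‖(1 : Matrix (Fin d) (Fin d) ℝ)‖ :=
      mul_nonneg (Real.sqrt_nonneg _) (norm_nonneg _)
    linarith
  have hcpos : 0 < c := lt_of_lt_of_le one_pos hc1
  set K : ℝ := 2 * CD + 2 * CA + 1 with hK_def
  have hKpos : 0 < K := by positivity
  -- the Gronwall step
  have hgron : ∀ ε > 0, m t1' ≤ gronwallBound 0 K ε (t1' - t0) := by
    intro ε hε
    refine le_gronwallBound_of_liminf_deriv_right_le (f' := fun x => K * m x + ε)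
      (fun s hs => (hm_cont s ⟨le_trans ht00 hs.1, le_trans hs.2 ht1'T⟩).continuousWithinAt)
      ?_ (by rw [hmt0']) (fun x hx => le_refl _) t1' (Set.right_mem_Icc.2 ht1'gt.le)
    intro x hx r hr
    have hxI : x ∈ Set.Icc (0:ℝ) T := ⟨le_trans ht00 hx.1, le_trans hx.2.le ht1'T⟩
    have hx0 : (0:ℝ) ≤ x := hxI.1
    have hmx0 : 0 ≤ m x := by
      rcases eq_or_lt_of_le hx.1 with h | h
      · rw [← h, hmt0']
      · exact (hpos_after x h (le_trans hx.2.le ht1'le)).le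
    have hmx1 : m x ≤ 1 := hsmall x ⟨hx.1, hx.2.le⟩
    set s0 : ℝ := min 1 (ε / (2 * (6 * CD + 2 * CA + 1))) with hs0_def
    have hs0pos : 0 < s0 := lt_min one_pos (by positivity)
    have hs0le1 : s0 ≤ 1 := min_le_left _ _
    have hs0le : s0 * (6 * CD + 2 * CA + 1) ≤ ε / 2 := by
      have h1 : s0 ≤ ε / (2 * (6 * CD + 2 * CA + 1)) := min_le_right _ _
      have h2 : (0:ℝ) < 6 * CD + 2 * CA + 1 := by positivity
      calc s0 * (6 * CD + 2 * CA + 1)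
          ≤ ε / (2 * (6 * CD + 2 * CA + 1)) * (6 * CD + 2 * CA + 1) :=
            mul_le_mul_of_nonneg_right h1 h2.le
        _ = ε / 2 := by field_simp
    set δ : ℝ := s0 ^ 2 / c with hδ_def
    have hδpos : 0 < δ := by positivity
    have hcδ : c * δ = s0 ^ 2 := by rw [hδ_def]; field_simp
    set P : Matrix (Fin d) (Fin d) ℝ := m x • (1 : Matrix (Fin d) (Fin d) ℝ) - G x with hP_def
    have hPsymm : Pᵀ = P := by
      rw [hP_def, Matrix.transpose_sub, Matrix.transpose_smul, Matrix.transpose_one, hGsymm x]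
    have hPdot : ∀ u : Fin d → ℝ, u ⬝ᵥ P.mulVec u = m x * (u ⬝ᵥ u) - Q (G x) u := by
      intro u
      rw [hP_def, Matrix.sub_mulVec, dotProduct_sub, Matrix.smul_mulVec,
        Matrix.one_mulVec, dotProduct_smul, smul_eq_mul]
      rfl
    have hPpsd : P.PosSemidef := by
      refine Matrix.PosSemidef.of_dotProduct_mulVec_nonneg ?_ ?_
      · rw [Matrix.IsHermitian, Matrix.conjTranspose_eq_transpose_of_trivial]
        exact hPsymm
      · intro v
        have hnn := nonneg_of_sphere P (fun u hu => ?_) v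
        · simpa using hnn
        · have hu' : u ⬝ᵥ u = 1 := hu
          rw [hPdot u, hu', mul_one]
          have := hmQ x u hu
          linarith
    have hBP : B P ≤ c := by
      have h1 : ‖P‖ ≤ ‖m x • (1 : Matrix (Fin d) (Fin d) ℝ)‖ + ‖G x‖ := norm_sub_le _ _
      have h2 : ‖m x • (1 : Matrix (Fin d) (Fin d) ℝ)‖
          = m x * ‖(1 : Matrix (Fin d) (Fin d) ℝ)‖ := by
        rw [norm_smul, Real.norm_eq_abs, abs_of_nonneg hmx0]
      have h3 : Real.sqrt d * ‖G x‖ ≤ CG := hCG hxI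
      have hsd : 0 ≤ Real.sqrt (d:ℝ) := Real.sqrt_nonneg _
      have h4 : B P = Real.sqrt d * ‖P‖ := rfl
      rw [h2] at h1
      have h5 : Real.sqrt d * ‖P‖
          ≤ Real.sqrt d * (m x * ‖(1 : Matrix (Fin d) (Fin d) ℝ)‖ + ‖G x‖) :=
        mul_le_mul_of_nonneg_left h1 hsd
      have h6 : Real.sqrt d * (m x * ‖(1 : Matrix (Fin d) (Fin d) ℝ)‖ + ‖G x‖)
          = m x * (Real.sqrt d * ‖(1 : Matrix (Fin d) (Fin d) ℝ)‖)
            + Real.sqrt d * ‖G x‖ := by ring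
      have h7 : m x * (Real.sqrt d * ‖(1 : Matrix (Fin d) (Fin d) ℝ)‖)
          ≤ 1 * (Real.sqrt d * ‖(1 : Matrix (Fin d) (Fin d) ℝ)‖) :=
        mul_le_mul_of_nonneg_right hmx1 (by positivity)
      rw [h4, hc_def]
      rw [h6] at h5
      linarith
    set Gp : Matrix (Fin d) (Fin d) ℝ :=
      Γ x + 2 • (G x * D x * G x) - (A x)ᵀ * G x - G x * A x with hGp_def
    have hder : HasDerivAt G Gp x := hGode x hxI
    have hBA : B (A x) ≤ CA := hCA hxI
    have hBD : B (D x) ≤ CD := hCD hxI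
    -- the key pointwise bound at near-maximizers
    have hkey : ∀ u ∈ sph d, u ⬝ᵥ P.mulVec u ≤ δ → Q Gp u ≤ K * m x + ε / 2 := by
      intro u hu hPu
      have hu' : u ⬝ᵥ u = 1 := hu
      have hP0 : 0 ≤ u ⬝ᵥ P.mulVec u := psd_dot_nonneg hPpsd u
      have hPP : (P.mulVec u) ⬝ᵥ (P.mulVec u) ≤ s0 ^ 2 := by
        have h1 := psd_sq_le hPpsd u
        have h2 : B P * (u ⬝ᵥ P.mulVec u) ≤ c * δ :=
          mul_le_mul hBP hPu hP0 hcpos.le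
        rw [hcδ] at h2
        linarith
      set g : Fin d → ℝ := (G x).mulVec u with hg_def
      have hGu : g = m x • u - P.mulVec u := by
        rw [hP_def, Matrix.sub_mulVec, Matrix.smul_mulVec, Matrix.one_mulVec,
          sub_sub_cancel]
      have he1 : (m x • u) ⬝ᵥ (m x • u) = m x * (m x * (u ⬝ᵥ u)) := by
        rw [smul_dotProduct, dotProduct_smul, smul_eq_mul, smul_eq_mul]
      have he2 : (m x • u) ⬝ᵥ (P.mulVec u) = m x * (u ⬝ᵥ P.mulVec u) := by
        rw [smul_dotProduct, smul_eq_mul]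
      have hexp : g ⬝ᵥ g = m x * (m x * 1) - 2 * (m x * (u ⬝ᵥ P.mulVec u))
          + (P.mulVec u) ⬝ᵥ (P.mulVec u) := by
        rw [hGu, dot_sub_expand, he1, he2, hu']
      have hg2 : g ⬝ᵥ g ≤ (m x + s0) ^ 2 := by
        have hq1 : 0 ≤ m x * (u ⬝ᵥ P.mulVec u) := mul_nonneg hmx0 hP0
        have hq2 : 0 ≤ m x * s0 := mul_nonneg hmx0 hs0pos.le
        have hsq : (m x + s0) ^ 2 = m x * (m x * 1) + 2 * (m x * s0) + s0 ^ 2 := by ring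
        rw [hexp, hsq]
        linarith [hPP, hq1, hq2]
      have hg2' : 0 ≤ g ⬝ᵥ g := dot_self_nonneg g
      have hms0 : 0 ≤ m x + s0 := by linarith [hs0pos.le]
      have hsqg : Real.sqrt (g ⬝ᵥ g) ≤ m x + s0 := by
        have := Real.sqrt_le_sqrt hg2
        rwa [Real.sqrt_sq hms0] at this
      -- decompose Q Gp u
      have e2 : Q (2 • (G x * D x * G x)) u = 2 * (g ⬝ᵥ (D x).mulVec g) := by
        have hsmul : (2:ℕ) • (G x * D x * G x) = (2:ℝ) • (G x * D x * G x) := by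
          rw [← Nat.cast_smul_eq_nsmul ℝ 2 (G x * D x * G x)]
          norm_num
        rw [hsmul, Q_smul]
        congr 1
        unfold Q
        rw [← Matrix.mulVec_mulVec, ← Matrix.mulVec_mulVec,
          symm_dot_move (hGsymm x)]
      have e3 : Q ((A x)ᵀ * G x) u = ((A x).mulVec u) ⬝ᵥ g := by
        unfold Q
        rw [← Matrix.mulVec_mulVec, transpose_dot_move]
      have e4 : Q (G x * A x) u = g ⬝ᵥ ((A x).mulVec u) := by
        unfold Q
        rw [← Matrix.mulVec_mulVec, symm_dot_move (hGsymm x)]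
      have hQdec : Q Gp u = Q (Γ x) u + 2 * (g ⬝ᵥ (D x).mulVec g)
          - ((A x).mulVec u) ⬝ᵥ g - g ⬝ᵥ ((A x).mulVec u) := by
        rw [hGp_def]
        have e1 : Q (Γ x + 2 • (G x * D x * G x) - (A x)ᵀ * G x - G x * A x) u
            = Q (Γ x) u + Q (2 • (G x * D x * G x)) u - Q ((A x)ᵀ * G x) u
              - Q (G x * A x) u := by
          unfold Q
          rw [Matrix.sub_mulVec, Matrix.sub_mulVec, Matrix.add_mulVec,
            dotProduct_sub, dotProduct_sub, dotProduct_add]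
        rw [e1, e2, e3, e4]
      have hΓle : Q (Γ x) u ≤ 0 := Q_neg_nonpos (hΓnsd x hx0) u
      -- the D-term
      have hDle : g ⬝ᵥ (D x).mulVec g ≤ CD * (m x + s0) ^ 2 := by
        have hcs := dot_CS g ((D x).mulVec g)
        have hDg := mulVec_dot_le (D x) g
        have hsq2 : Real.sqrt (((D x).mulVec g) ⬝ᵥ ((D x).mulVec g))
            ≤ B (D x) * Real.sqrt (g ⬝ᵥ g) := by
          have := Real.sqrt_le_sqrt hDg
          calc Real.sqrt (((D x).mulVec g) ⬝ᵥ ((D x).mulVec g))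
              ≤ Real.sqrt (B (D x) ^ 2 * (g ⬝ᵥ g)) := this
            _ = B (D x) * Real.sqrt (g ⬝ᵥ g) := by
                rw [Real.sqrt_mul (sq_nonneg _), Real.sqrt_sq (B_nonneg _)]
        have h1 : g ⬝ᵥ (D x).mulVec g
            ≤ Real.sqrt (g ⬝ᵥ g) * (B (D x) * Real.sqrt (g ⬝ᵥ g)) := by
          refine le_trans (le_trans (le_abs_self _) hcs) ?_
          exact mul_le_mul_of_nonneg_left hsq2 (Real.sqrt_nonneg _)
        have h2 : Real.sqrt (g ⬝ᵥ g) * (B (D x) * Real.sqrt (g ⬝ᵥ g))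
            = B (D x) * (Real.sqrt (g ⬝ᵥ g) * Real.sqrt (g ⬝ᵥ g)) := by ring
        rw [h2, Real.mul_self_sqrt hg2'] at h1
        calc g ⬝ᵥ (D x).mulVec g ≤ B (D x) * (g ⬝ᵥ g) := h1
          _ ≤ CD * (m x + s0) ^ 2 := mul_le_mul hBD hg2 hg2' hCD0
      -- the A-terms
      have hA1 : |((A x).mulVec u) ⬝ᵥ g| ≤ CA * (m x + s0) := by
        have hcs := dot_CS ((A x).mulVec u) g
        have hAu : Real.sqrt (((A x).mulVec u) ⬝ᵥ ((A x).mulVec u)) ≤ B (A x) := by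
          have := mulVec_dot_le (A x) u
          rw [hu', mul_one] at this
          have h5 := Real.sqrt_le_sqrt this
          rwa [Real.sqrt_sq (B_nonneg _)] at h5
        calc |((A x).mulVec u) ⬝ᵥ g|
            ≤ Real.sqrt (((A x).mulVec u) ⬝ᵥ ((A x).mulVec u)) * Real.sqrt (g ⬝ᵥ g) := hcs
          _ ≤ CA * (m x + s0) := by
              apply mul_le_mul (le_trans hAu hBA) hsqg (Real.sqrt_nonneg _) hCA0
      have hA2 : |g ⬝ᵥ ((A x).mulVec u)| ≤ CA * (m x + s0) := by
        rw [dotProduct_comm]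
        exact hA1
      rw [hQdec, hK_def]
      exact combine_bound hCA0 hCD0 hmx0 hmx1 hs0pos.le hs0le1 hs0le hΓle hDle
        (abs_le.1 hA1).1 (abs_le.1 hA2).1
    -- from the pointwise bound to the slope bound
    have hlo := hasDerivAt_iff_isLittleO.1 hder
    have hc'pos : 0 < ε / (2 * (Real.sqrt d + 1)) := by positivity
    have hE1 : ∀ᶠ z in nhds x,
        ‖G z - G x - (z - x) • Gp‖ ≤ ε / (2 * (Real.sqrt d + 1)) * ‖z - x‖ :=
      Asymptotics.isLittleO_iff.1 hlo hc'pos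
    have hE2 : ∀ᶠ z in nhds x, Real.sqrt d * ‖G z - G x‖ < δ / 2 := by
      have h1 : Filter.Tendsto (fun z => Real.sqrt d * ‖G z - G x‖) (nhds x) (nhds 0) := by
        have h2 : Filter.Tendsto G (nhds x) (nhds (G x)) := hGcont x hxI
        have h3 := (h2.sub (tendsto_const_nhds (x := G x))).norm
        rw [sub_self, norm_zero] at h3
        simpa using h3.const_mul (Real.sqrt d)
      exact h1.eventually_lt_const (by positivity)
    have hev : ∀ᶠ z in nhdsWithin x (Set.Ioi x), (z - x)⁻¹ * (m z - m x) < r := by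
      filter_upwards [hE1.filter_mono nhdsWithin_le_nhds,
        hE2.filter_mono nhdsWithin_le_nhds, self_mem_nhdsWithin] with z hz1 hz2 hz3
      have hzx : 0 < z - x := sub_pos.2 hz3
      obtain ⟨u, hu, hQz⟩ := lam_exists hd (G z)
      have hu' : u ⬝ᵥ u = 1 := hu
      have hmz : |m z - m x| ≤ Real.sqrt d * ‖G z - G x‖ := habs z x
      have hQdiff : |Q (G z - G x) u| ≤ Real.sqrt d * ‖G z - G x‖ := by
        have := Q_abs_le (M := G z - G x) hu
        rwa [B] at this
      have hnear : u ⬝ᵥ P.mulVec u ≤ δ := by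
        rw [hPdot u, hu', mul_one]
        have h5 : Q (G x) u = Q (G z) u - Q (G z - G x) u := by rw [Q_sub]; ring
        rw [h5, hQz]
        have ha1 := abs_le.1 hmz
        have ha2 := abs_le.1 hQdiff
        linarith [ha1.1, ha1.2, ha2.1, ha2.2, hz2]
      have hQGp : Q Gp u ≤ K * m x + ε / 2 := hkey u hu hnear
      have hQdecomp : Q (G z - G x) u
          = (z - x) * Q Gp u + Q (G z - G x - (z - x) • Gp) u := by
        have hh : G z - G x = (z - x) • Gp + (G z - G x - (z - x) • Gp) := by abel
        conv_lhs => rw [hh]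
        rw [Q_add, Q_smul]
      have hR : Q (G z - G x - (z - x) • Gp) u ≤ ε / 2 * (z - x) := by
        have habs2 := Q_abs_le (M := G z - G x - (z - x) • Gp) hu
        rw [B] at habs2
        have h7 : Real.sqrt d * ‖G z - G x - (z - x) • Gp‖
            ≤ Real.sqrt d * (ε / (2 * (Real.sqrt d + 1)) * ‖z - x‖) :=
          mul_le_mul_of_nonneg_left hz1 (Real.sqrt_nonneg _)
        have h8 : ‖z - x‖ = z - x := by rw [Real.norm_eq_abs, abs_of_pos hzx]
        have h9 : Real.sqrt d * (ε / (2 * (Real.sqrt d + 1))) ≤ ε / 2 := by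
          have h90 : Real.sqrt (d:ℝ) ≤ Real.sqrt d + 1 := by linarith
          calc Real.sqrt (d:ℝ) * (ε / (2 * (Real.sqrt d + 1)))
              ≤ (Real.sqrt d + 1) * (ε / (2 * (Real.sqrt d + 1))) :=
                mul_le_mul_of_nonneg_right h90 (by positivity)
            _ = ε / 2 := by
                field_simp
        have h10 : Real.sqrt d * ‖G z - G x - (z - x) • Gp‖ ≤ ε / 2 * (z - x) := by
          rw [h8] at h7
          calc Real.sqrt d * ‖G z - G x - (z - x) • Gp‖
              ≤ Real.sqrt d * (ε / (2 * (Real.sqrt d + 1))) * (z - x) := by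
                rw [mul_assoc]; exact h7
            _ ≤ ε / 2 * (z - x) := mul_le_mul_of_nonneg_right h9 hzx.le
        exact le_trans (le_trans (le_abs_self _) habs2) h10
      have h10 : m z - m x ≤ Q (G z - G x) u := by
        have h11 : Q (G x) u ≤ m x := hmQ x u hu
        rw [Q_sub, hQz]
        linarith
      have h12 : m z - m x ≤ (z - x) * (K * m x + ε) := by
        calc m z - m x ≤ Q (G z - G x) u := h10
          _ = (z - x) * Q Gp u + Q (G z - G x - (z - x) • Gp) u := hQdecomp
          _ ≤ (z - x) * (K * m x + ε / 2) + ε / 2 * (z - x) :=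
              add_le_add (mul_le_mul_of_nonneg_left hQGp hzx.le) hR
          _ = (z - x) * (K * m x + ε) := by ring
      have h13 : (z - x)⁻¹ * (m z - m x) ≤ K * m x + ε := by
        rw [inv_mul_eq_div, div_le_iff₀ hzx]
        linarith [h12]
      exact lt_of_le_of_lt h13 hr
    exact hev.frequently
  -- conclude the contradiction
  set E : ℝ := Real.exp (K * (t1' - t0)) with hE_def
  have hc3 : 0 ≤ (E - 1) / K := by
    apply div_nonneg _ hKpos.le
    have : (1:ℝ) ≤ E := by
      rw [hE_def]
      apply Real.one_le_exp
      exact mul_nonneg hKpos.le (by linarith [ht1'gt.le])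
    linarith
  set c3 : ℝ := (E - 1) / K with hc3_def
  have hfinal : m t1' ≤ m t1' / (2 * (c3 + 1)) * c3 := by
    have hεpos : 0 < m t1' / (2 * (c3 + 1)) := by positivity
    have := hgron _ hεpos
    rw [gronwallBound_of_K_ne_0 hKpos.ne'] at this
    calc m t1' ≤ 0 * Real.exp (K * (t1' - t0)) +
          m t1' / (2 * (c3 + 1)) / K * (Real.exp (K * (t1' - t0)) - 1) := this
      _ = m t1' / (2 * (c3 + 1)) * c3 := by
          rw [hc3_def, hE_def, zero_mul, zero_add, div_mul_eq_mul_div, mul_div_assoc]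
  have hlt : m t1' / (2 * (c3 + 1)) * c3 < m t1' := by
    rw [div_mul_eq_mul_div, div_lt_iff₀ (by positivity)]
    have hq : 0 ≤ m t1' * c3 := mul_nonneg hmt1'.le hc3
    nlinarith [hq, hmt1', hc3]
  linarith
end

section
/- Let μ, Σ solve the ODE system μ' t = (A t + Σ t Γ t) μ t + Σ t c t + e t, Σ' t = A t Σ t + Σ t (A t)ᵀ + 2 D t + Σ t Γ t Σ t, m' t / m t = (1/2) μ tᵀ Γ t μ t + c tᵀ μ t + b t + (1/2) tr(Γ t Σ t), with Σ t symmetric positive definite, m t > 0, and let ρ t := m t · N(μ t, Σ t) denote the Gaussian measure on ℝ^d with density m t (2π)^{-d/2} det(Σ t)^{-1/2} exp(-(x-μ t)ᵀ (Σ t)⁻¹ (x - μ t)/2). Then ρ t is a classical solution of the PDE ∂_t ρ = -∇·((A t x + e t) ρ - D t ∇ρ) + (b t + c tᵀ x + (1/2) xᵀ Γ t x) ρ. -/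
open Matrix Real

attribute [local instance] Matrix.linftyOpNormedAddCommGroup Matrix.linftyOpNormedSpace
  Matrix.linftyOpNormedRing Matrix.linftyOpNormedAlgebra


variable {d : ℕ}

/-- dot product with a fixed vector as a continuous linear map -/
noncomputable def dpCLM (a : Fin d → ℝ) : (Fin d → ℝ) →L[ℝ] ℝ :=
  LinearMap.toContinuousLinearMap
    { toFun := fun h => a ⬝ᵥ h
      map_add' := fun u v => dotProduct_add a u v
      map_smul' := fun r u => by simp [dotProduct_smul] }

@[simp] lemma dpCLM_apply (a h : Fin d → ℝ) : dpCLM a h = a ⬝ᵥ h := rfl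

lemma hasFDerivAt_dp (a : Fin d → ℝ) (x : Fin d → ℝ) :
    HasFDerivAt (fun y : Fin d → ℝ => a ⬝ᵥ y) (dpCLM a) x :=
  (dpCLM a).hasFDerivAt

lemma hasFDerivAt_quadform (P : Matrix (Fin d) (Fin d) ℝ) (μ0 x : Fin d → ℝ) :
    HasFDerivAt (fun y : Fin d → ℝ => (y - μ0) ⬝ᵥ (P *ᵥ (y - μ0)))
      (dpCLM (Pᵀ *ᵥ (x - μ0) + P *ᵥ (x - μ0))) x := by
  have h1 : ∀ i : Fin d, HasFDerivAt (fun y : Fin d → ℝ => (y - μ0) i)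
      (ContinuousLinearMap.proj i : (Fin d → ℝ) →L[ℝ] ℝ) x := by
    intro i
    simpa using ((ContinuousLinearMap.proj i : (Fin d → ℝ) →L[ℝ] ℝ).hasFDerivAt (x := x)).sub_const (μ0 i)
  have h2 : ∀ i : Fin d, HasFDerivAt (fun y : Fin d → ℝ => P i ⬝ᵥ (y - μ0))
      (dpCLM (P i)) x := by
    intro i
    have : (fun y : Fin d → ℝ => P i ⬝ᵥ (y - μ0)) = fun y => P i ⬝ᵥ y - P i ⬝ᵥ μ0 := by
      funext y; rw [dotProduct_sub]
    rw [this]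
    exact (hasFDerivAt_dp (P i) x).sub_const _
  have h3 : HasFDerivAt (fun y : Fin d → ℝ => ∑ i, ((y - μ0) i) * (P i ⬝ᵥ (y - μ0)))
      (∑ i, (((x - μ0) i) • dpCLM (P i) + (P i ⬝ᵥ (x - μ0)) • (ContinuousLinearMap.proj i))) x :=
    HasFDerivAt.fun_sum (fun i _ => (h1 i).mul (h2 i))
  have heq : (fun y : Fin d → ℝ => (y - μ0) ⬝ᵥ (P *ᵥ (y - μ0)))
      = fun y : Fin d → ℝ => ∑ i, ((y - μ0) i) * (P i ⬝ᵥ (y - μ0)) := by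
    funext y; simp [dotProduct, mulVec]
  rw [heq]
  convert h3 using 1
  ext h
  simp only [ContinuousLinearMap.sum_apply, ContinuousLinearMap.add_apply,
    ContinuousLinearMap.smul_apply, dpCLM_apply, ContinuousLinearMap.proj_apply, smul_eq_mul,
    add_dotProduct, Finset.sum_add_distrib]
  congr 1
  · simp only [dotProduct, mulVec, transpose_apply, Finset.sum_mul, Finset.mul_sum]
    rw [Finset.sum_comm]
    exact Finset.sum_congr rfl fun i _ => Finset.sum_congr rfl fun j _ => by ring

lemma gaussian_hasFDerivAt (C : ℝ) (P : Matrix (Fin d) (Fin d) ℝ) (hP : Pᵀ = P)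
    (μ0 x : Fin d → ℝ) :
    HasFDerivAt (fun y : Fin d → ℝ =>
        C * Real.exp (-(1 / 2) * ((y - μ0) ⬝ᵥ (P *ᵥ (y - μ0)))))
      ((-(C * Real.exp (-(1 / 2) * ((x - μ0) ⬝ᵥ (P *ᵥ (x - μ0)))))) •
        dpCLM (P *ᵥ (x - μ0))) x := by
  have h := (((hasFDerivAt_quadform P μ0 x).const_mul (-(1 / 2) : ℝ)).exp).const_mul C
  convert h using 1
  rotate_right
  rw [hP]
  ext h'
  simp only [ContinuousLinearMap.smul_apply, dpCLM_apply, smul_eq_mul, add_dotProduct]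
  ring
  all_goals rfl

noncomputable def detCML (d : ℕ) :
    ContinuousMultilinearMap ℝ (fun _ : Fin d => Fin d → ℝ) ℝ :=
  MultilinearMap.mkContinuous
    (Matrix.detRowAlternating : (Fin d → ℝ) [⋀^Fin d]→ₗ[ℝ] ℝ).toMultilinearMap
    (Nat.factorial d) (by
      intro mrows
      have hdet : (Matrix.detRowAlternating : (Fin d → ℝ) [⋀^Fin d]→ₗ[ℝ] ℝ).toMultilinearMap mrows
          = (Matrix.of mrows).det := rfl
      rw [hdet, Matrix.det_apply]
      refine le_trans (norm_sum_le _ _) ?_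
      have hterm : ∀ σ : Equiv.Perm (Fin d),
          ‖Equiv.Perm.sign σ • ∏ i, (Matrix.of mrows) (σ i) i‖ ≤ ∏ i, ‖mrows i‖ := by
        intro σ
        have h1 : ‖Equiv.Perm.sign σ • ∏ i, (Matrix.of mrows) (σ i) i‖
            = ‖∏ i, (Matrix.of mrows) (σ i) i‖ := by
          rcases Int.units_eq_one_or (Equiv.Perm.sign σ) with h | h <;>
            simp [h, Units.smul_def]
        rw [h1]
        have h2 : ‖∏ i, (Matrix.of mrows) (σ i) i‖ ≤ ∏ i, ‖mrows (σ i)‖ := by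
          rw [Real.norm_eq_abs, Finset.abs_prod]
          exact Finset.prod_le_prod (fun i _ => abs_nonneg _)
            (fun i _ => norm_le_pi_norm (mrows (σ i)) i)
        refine h2.trans (le_of_eq ?_)
        exact Equiv.prod_comp σ (fun i => ‖mrows i‖)
      refine le_trans (Finset.sum_le_sum fun σ _ => hterm σ) ?_
      rw [Finset.sum_const, Finset.card_univ, Fintype.card_perm, Fintype.card_fin,
        nsmul_eq_mul])

lemma detCML_apply (M : Matrix (Fin d) (Fin d) ℝ) :
    detCML d (fun i => M i) = M.det := rfl

noncomputable def rowCLM (d : ℕ) (i : Fin d) :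
    Matrix (Fin d) (Fin d) ℝ →L[ℝ] (Fin d → ℝ) :=
  LinearMap.toContinuousLinearMap
    { toFun := fun M => M i
      map_add' := fun M N => rfl
      map_smul' := fun r M => rfl }

lemma hasDerivAt_matrix_det {F : ℝ → Matrix (Fin d) (Fin d) ℝ}
    {F' : Matrix (Fin d) (Fin d) ℝ} {t : ℝ} (hF : HasDerivAt F F' t) :
    HasDerivAt (fun s => (F s).det) ((F' * (F t).adjugate).trace) t := by
  classical
  have hrow : ∀ i, HasDerivAt (fun s => F s i) (F' i) t := fun i =>
    (rowCLM d i).hasFDerivAt.comp_hasDerivAt t hF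
  have hg : ∀ i : Fin d, HasFDerivAt (fun s => F s i)
      (ContinuousLinearMap.smulRight (1 : ℝ →L[ℝ] ℝ) (F' i)) t := fun i =>
    hasDerivAt_iff_hasFDerivAt.1 (hrow i)
  have H := (HasFDerivAt.multilinear_comp (detCML d) hg).hasDerivAt
  have hfun : (fun s => detCML d fun i => F s i) = fun s => (F s).det := rfl
  rw [hfun] at H
  convert H using 1
  rotate_right
  have happ : ∀ i : Fin d,
      ((detCML d).toContinuousLinearMap (fun j => F t j) i)
        ((ContinuousLinearMap.smulRight (1 : ℝ →L[ℝ] ℝ) (F' i)) 1)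
      = ((F t).updateRow i (F' i)).det := by
    intro i
    have : ((ContinuousLinearMap.smulRight (1 : ℝ →L[ℝ] ℝ) (F' i)) 1) = F' i := by simp
    rw [this]
    show detCML d (Function.update (fun j => F t j) i (F' i)) = _
    have : Function.update (fun j => F t j) i (F' i) = fun j => ((F t).updateRow i (F' i)) j := by
      funext j
      by_cases h : j = i <;> simp [h, Function.update_apply, Matrix.updateRow_apply]
    rw [this, detCML_apply]
  simp only [ContinuousLinearMap.sum_apply, ContinuousLinearMap.comp_apply, happ]
  have hcr : ∀ i : Fin d, ((F t).updateRow i (F' i)).det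
      = ((F t).adjugateᵀ *ᵥ (F' i)) i := by
    intro i
    rw [← Matrix.cramer_transpose_apply, Matrix.adjugate_transpose,
      Matrix.cramer_eq_adjugate_mulVec]
  simp only [hcr]
  simp only [Matrix.trace, Matrix.diag, Matrix.mul_apply, Matrix.mulVec, dotProduct,
    Matrix.transpose_apply]
  exact Finset.sum_congr rfl fun i _ => Finset.sum_congr rfl fun j _ => by ring
  all_goals rfl

lemma hasDerivAt_matrix_inv {F : ℝ → Matrix (Fin d) (Fin d) ℝ}
    {F' : Matrix (Fin d) (Fin d) ℝ} {t : ℝ} (hF : HasDerivAt F F' t)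
    (hdetu : ∀ s, IsUnit (F s).det) :
    HasDerivAt (fun s => (F s)⁻¹) (-((F t)⁻¹ * F' * (F t)⁻¹)) t := by
  obtain ⟨u, hu⟩ := (Matrix.isUnit_iff_isUnit_det (F t)).2 (hdetu t)
  have h1 := hasFDerivAt_ringInverse (𝕜 := ℝ) u
  rw [hu] at h1
  have h2 := h1.comp_hasDerivAt t hF
  have hfun : (Ring.inverse ∘ fun s => F s) = fun s => (F s)⁻¹ := by
    funext s; simp [Function.comp, (Matrix.nonsing_inv_eq_ringInverse (F s)).symm]
  rw [hfun] at h2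
  have hcoe : (↑u⁻¹ : Matrix (Fin d) (Fin d) ℝ) = (F t)⁻¹ := by
    rw [Matrix.coe_units_inv, hu]
  convert h2 using 1
  rotate_right
  simp [hcoe, ContinuousLinearMap.mulLeftRight_apply]
  all_goals rfl

noncomputable def entryCLM (d : ℕ) (i j : Fin d) :
    Matrix (Fin d) (Fin d) ℝ →L[ℝ] ℝ :=
  LinearMap.toContinuousLinearMap
    { toFun := fun M => M i j
      map_add' := fun _ _ => rfl
      map_smul' := fun _ _ => rfl }

lemma hasDerivAt_quadform_time {w : ℝ → Fin d → ℝ} {w' : Fin d → ℝ}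
    {Pm : ℝ → Matrix (Fin d) (Fin d) ℝ} {P' : Matrix (Fin d) (Fin d) ℝ} {t : ℝ}
    (hw : HasDerivAt w w' t) (hP : HasDerivAt Pm P' t) :
    HasDerivAt (fun s => w s ⬝ᵥ (Pm s *ᵥ w s))
      (w' ⬝ᵥ (Pm t *ᵥ w t) + w t ⬝ᵥ (P' *ᵥ w t) + w t ⬝ᵥ (Pm t *ᵥ w')) t := by
  have hwi : ∀ i, HasDerivAt (fun s => w s i) (w' i) t := fun i => hasDerivAt_pi.1 hw i
  have hPij : ∀ i j, HasDerivAt (fun s => Pm s i j) (P' i j) t := fun i j =>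
    (entryCLM d i j).hasFDerivAt.comp_hasDerivAt t hP
  have hfun : (fun s => w s ⬝ᵥ (Pm s *ᵥ w s))
      = fun s => ∑ i, ∑ j, w s i * (Pm s i j * w s j) := by
    funext s; simp [dotProduct, mulVec, Finset.mul_sum]
  rw [hfun]
  have Hinner : ∀ i, HasDerivAt (fun s => ∑ j, w s i * (Pm s i j * w s j))
      (∑ j, (w' i * (Pm t i j * w t j)
        + w t i * (P' i j * w t j + Pm t i j * w' j))) t := fun i =>
    HasDerivAt.fun_sum fun j _ => (hwi i).mul ((hPij i j).mul (hwi j))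
  have H : HasDerivAt (fun s => ∑ i, ∑ j, w s i * (Pm s i j * w s j))
      (∑ i, ∑ j, (w' i * (Pm t i j * w t j)
        + w t i * (P' i j * w t j + Pm t i j * w' j))) t :=
    HasDerivAt.fun_sum fun i _ => Hinner i
  convert H using 1
  simp only [dotProduct, mulVec, Finset.mul_sum, mul_add, Finset.sum_add_distrib]
  ring

lemma dot_mulVec_left (M : Matrix (Fin d) (Fin d) ℝ) (a b : Fin d → ℝ) :
    (M *ᵥ a) ⬝ᵥ b = a ⬝ᵥ (Mᵀ *ᵥ b) := by
  rw [Matrix.dotProduct_mulVec, Matrix.vecMul_transpose]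

lemma core_identity (Am Dm Γm S Pm : Matrix (Fin d) (Fin d) ℝ)
    (μv cv ev : Fin d → ℝ) (bv : ℝ) (u v xv : Fin d → ℝ)
    (hS : Sᵀ = S) (hΓ : Γmᵀ = Γm) (hPsymm : Pmᵀ = Pm)
    (hSP : S * Pm = 1) (hPS : Pm * S = 1)
    (hv : v = Pm *ᵥ u) (hxv : xv = μv + u) :
    ((1 / 2) * (μv ⬝ᵥ (Γm *ᵥ μv)) + cv ⬝ᵥ μv + bv + (1 / 2) * ((Γm * S).trace))
      - (1 / 2) * (((Am * S + S * Amᵀ + 2 • Dm + S * Γm * S) * Pm).trace)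
      - (1 / 2) * ((-((Am + S * Γm) *ᵥ μv + S *ᵥ cv + ev)) ⬝ᵥ (Pm *ᵥ u)
          + u ⬝ᵥ ((-(Pm * (Am * S + S * Amᵀ + 2 • Dm + S * Γm * S) * Pm)) *ᵥ u)
          + u ⬝ᵥ (Pm *ᵥ (-((Am + S * Γm) *ᵥ μv + S *ᵥ cv + ev))))
    = v ⬝ᵥ (Am *ᵥ xv + ev) + v ⬝ᵥ (Dm *ᵥ v) - Am.trace - (Dm * Pm).trace
      + bv + cv ⬝ᵥ xv + (1 / 2) * (xv ⬝ᵥ (Γm *ᵥ xv)) := by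
  have huPz : ∀ z, u ⬝ᵥ (Pm *ᵥ z) = v ⬝ᵥ z := by
    intro z
    rw [hv, dot_mulVec_left Pm u z, hPsymm]
  have hSv : S *ᵥ v = u := by
    rw [hv, Matrix.mulVec_mulVec, hSP, Matrix.one_mulVec]
  have hvS : ∀ w, v ⬝ᵥ (S *ᵥ w) = u ⬝ᵥ w := by
    intro w
    rw [dotProduct_comm, dot_mulVec_left, hS, hSv, dotProduct_comm]
  have hΓflip : ∀ a b2, a ⬝ᵥ (Γm *ᵥ b2) = b2 ⬝ᵥ (Γm *ᵥ a) := by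
    intro a b2
    rw [dotProduct_comm, dot_mulVec_left, hΓ]
  have hμ'v : (((Am + S * Γm) *ᵥ μv + S *ᵥ cv + ev)) ⬝ᵥ v
      = v ⬝ᵥ (Am *ᵥ μv) + μv ⬝ᵥ (Γm *ᵥ u) + cv ⬝ᵥ u + v ⬝ᵥ ev := by
    rw [add_dotProduct, add_dotProduct, Matrix.add_mulVec, add_dotProduct,
      ← Matrix.mulVec_mulVec]
    rw [dotProduct_comm ((S *ᵥ (Γm *ᵥ μv))) v, hvS]
    rw [dotProduct_comm (S *ᵥ cv) v, hvS]
    rw [hΓflip u μv, dotProduct_comm u cv, dotProduct_comm ev v,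
      dotProduct_comm (Am *ᵥ μv) v]
  have ha : v ⬝ᵥ ((Am * S) *ᵥ v) = v ⬝ᵥ (Am *ᵥ u) := by
    rw [← Matrix.mulVec_mulVec, hSv]
  have hb : v ⬝ᵥ ((S * Amᵀ) *ᵥ v) = v ⬝ᵥ (Am *ᵥ u) := by
    rw [← Matrix.mulVec_mulVec, hvS, dotProduct_comm, dot_mulVec_left,
      Matrix.transpose_transpose]
  have hc : v ⬝ᵥ ((2 • Dm) *ᵥ v) = v ⬝ᵥ (Dm *ᵥ v) + v ⬝ᵥ (Dm *ᵥ v) := by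
    rw [two_smul, Matrix.add_mulVec, dotProduct_add]
  have hd : v ⬝ᵥ ((S * Γm * S) *ᵥ v) = u ⬝ᵥ (Γm *ᵥ u) := by
    rw [← Matrix.mulVec_mulVec, ← Matrix.mulVec_mulVec, hSv, hvS]
  have H3 : u ⬝ᵥ ((Pm * (Am * S + S * Amᵀ + 2 • Dm + S * Γm * S) * Pm) *ᵥ u)
      = (v ⬝ᵥ (Am *ᵥ u) + v ⬝ᵥ (Am *ᵥ u)) + (v ⬝ᵥ (Dm *ᵥ v) + v ⬝ᵥ (Dm *ᵥ v))
        + u ⬝ᵥ (Γm *ᵥ u) := by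
    rw [← Matrix.mulVec_mulVec, ← hv, ← Matrix.mulVec_mulVec, huPz,
      Matrix.add_mulVec, Matrix.add_mulVec, Matrix.add_mulVec,
      dotProduct_add, dotProduct_add, dotProduct_add, ha, hb, hc, hd]
  have H1 : ((Am * S + S * Amᵀ + 2 • Dm + S * Γm * S) * Pm).trace
      = Am.trace + Am.trace + ((Dm * Pm).trace + (Dm * Pm).trace)
        + (Γm * S).trace := by
    have e1 : Am * S * Pm = Am := by rw [mul_assoc, hSP, mul_one]
    have e2 : ((S * Amᵀ) * Pm).trace = Am.trace := by
      rw [Matrix.trace_mul_comm, ← mul_assoc, hPS, one_mul, Matrix.trace_transpose]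
    have e3 : (2 • Dm) * Pm = Dm * Pm + Dm * Pm := by rw [two_smul, add_mul]
    have e4 : ((S * Γm * S) * Pm).trace = (Γm * S).trace := by
      rw [mul_assoc (S * Γm) S Pm, hSP, mul_one, Matrix.trace_mul_comm]
    rw [add_mul, add_mul, add_mul, Matrix.trace_add, Matrix.trace_add,
      Matrix.trace_add, e1, e2, e3, Matrix.trace_add, e4]
  have R1 : v ⬝ᵥ (Am *ᵥ xv + ev)
      = v ⬝ᵥ (Am *ᵥ μv) + v ⬝ᵥ (Am *ᵥ u) + v ⬝ᵥ ev := by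
    rw [dotProduct_add, hxv, Matrix.mulVec_add, dotProduct_add]
  have R2 : cv ⬝ᵥ xv = cv ⬝ᵥ μv + cv ⬝ᵥ u := by rw [hxv, dotProduct_add]
  have R3 : xv ⬝ᵥ (Γm *ᵥ xv)
      = μv ⬝ᵥ (Γm *ᵥ μv) + (μv ⬝ᵥ (Γm *ᵥ u) + μv ⬝ᵥ (Γm *ᵥ u))
        + u ⬝ᵥ (Γm *ᵥ u) := by
    rw [hxv, Matrix.mulVec_add, dotProduct_add, add_dotProduct, add_dotProduct,
      hΓflip u μv]
    ring
  simp only [neg_dotProduct, Matrix.mulVec_neg, dotProduct_neg, Matrix.neg_mulVec]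
  rw [← hv, huPz, dotProduct_comm v (((Am + S * Γm) *ᵥ μv + S *ᵥ cv + ev)), hμ'v,
    H3, H1, R1, R2, R3]
  ring


/-- The Gaussian ansatz `ρ t = m t · N(μ t, Σ t)` whose moments solve the stated
ODE system is a classical pointwise solution of the Fokker-Planck equation with
linear drift `A t x + e t`, diffusivity `D t` and quadratic source
`b t + c tᵀ x + ½ xᵀ Γ t x`. -/
theorem gaussian_solves_fokker_planck_quadratic_fitness {d : ℕ}
    (A D Γ : ℝ → Matrix (Fin d) (Fin d) ℝ)
    (e c : ℝ → Fin d → ℝ) (b : ℝ → ℝ)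
    (μ : ℝ → Fin d → ℝ) (Sig : ℝ → Matrix (Fin d) (Fin d) ℝ) (m : ℝ → ℝ)
    (hA : Continuous A) (hD : Continuous D) (hΓ : Continuous Γ)
    (he : Continuous e) (hc : Continuous c) (hb : Continuous b)
    (hDpd : ∀ t, (D t).PosDef) (hΓsymm : ∀ t, (Γ t).IsSymm)
    (hSigpd : ∀ t, (Sig t).PosDef) (hm : ∀ t, 0 < m t)
    (hμ : ∀ t, HasDerivAt μ ((A t + Sig t * Γ t) *ᵥ μ t + Sig t *ᵥ c t + e t) t)
    (hSig : ∀ t, HasDerivAt Sig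
      (A t * Sig t + Sig t * (A t)ᵀ + 2 • D t + Sig t * Γ t * Sig t) t)
    (hmo : ∀ t, HasDerivAt m
      (((1 / 2) * (μ t ⬝ᵥ (Γ t *ᵥ μ t)) + c t ⬝ᵥ μ t + b t
        + (1 / 2) * ((Γ t * Sig t).trace)) * m t) t)
    (ρ : ℝ → (Fin d → ℝ) → ℝ)
    (hρ : ∀ t x, ρ t x = m t * ((2 * π) ^ (d : ℕ) * (Sig t).det) ^ (-(1 : ℝ) / 2) *
      Real.exp (-(1 / 2) * ((x - μ t) ⬝ᵥ ((Sig t)⁻¹ *ᵥ (x - μ t))))) :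
    ∀ t (x : Fin d → ℝ),
      deriv (fun s => ρ s x) t =
        -(∑ i, fderiv ℝ
            (fun y => ((A t *ᵥ y + e t) i) * ρ t y -
              ∑ j, D t i j * fderiv ℝ (fun z => ρ t z) y (Pi.single j 1))
            x (Pi.single i 1))
        + (b t + c t ⬝ᵥ x + (1 / 2) * (x ⬝ᵥ (Γ t *ᵥ x))) * ρ t x := by
  intro t x
  classical
  have hdetpos : ∀ s, 0 < (Sig s).det := fun s => (hSigpd s).det_pos
  have hdetu : ∀ s, IsUnit (Sig s).det := fun s => (hdetpos s).ne'.isUnit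
  have hSsym : ∀ s, (Sig s)ᵀ = Sig s := by
    intro s
    have h := (hSigpd s).1
    ext i j
    have h2 := congrFun (congrFun h i) j
    simpa using h2
  have hSP : Sig t * (Sig t)⁻¹ = 1 := Matrix.mul_nonsing_inv _ (hdetu t)
  have hPS : (Sig t)⁻¹ * Sig t = 1 := Matrix.nonsing_inv_mul _ (hdetu t)
  have hPsymm : ((Sig t)⁻¹)ᵀ = (Sig t)⁻¹ := by
    rw [Matrix.transpose_nonsing_inv, hSsym t]
  -- spatial gradient of ρ t
  have hρtfun : ρ t = fun y : Fin d → ℝ =>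
      (m t * ((2 * π) ^ (d : ℕ) * (Sig t).det) ^ (-(1 : ℝ) / 2)) *
        Real.exp (-(1 / 2) * ((y - μ t) ⬝ᵥ ((Sig t)⁻¹ *ᵥ (y - μ t)))) :=
    funext fun y => hρ t y
  have hgrad : ∀ y, HasFDerivAt (ρ t)
      ((-(ρ t y)) • dpCLM ((Sig t)⁻¹ *ᵥ (y - μ t))) y := by
    intro y
    rw [hρ t y, hρtfun]
    exact gaussian_hasFDerivAt _ _ hPsymm (μ t) y
  have hfd : ∀ y (j : Fin d), fderiv ℝ (fun z => ρ t z) y (Pi.single j 1)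
      = -(ρ t y * (((Sig t)⁻¹ *ᵥ (y - μ t)) j)) := by
    intro y j
    rw [show (fun z => ρ t z) = ρ t from rfl, (hgrad y).fderiv]
    simp [dpCLM_apply, dotProduct, Pi.single_apply, neg_mul]
  have hrowdot : ∀ (M N : Matrix (Fin d) (Fin d) ℝ) (i : Fin d) (w : Fin d → ℝ),
      M i ⬝ᵥ (N *ᵥ w) = (M * N) i ⬝ᵥ w := by
    intro M N i w
    simp [dotProduct, Matrix.mulVec, Matrix.mul_apply, Finset.mul_sum,
      Finset.sum_mul]
    rw [Finset.sum_comm]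
    exact Finset.sum_congr rfl fun a _ => Finset.sum_congr rfl fun b _ => by ring
  have hFi_eq : ∀ i : Fin d,
      (fun y => ((A t *ᵥ y + e t) i) * ρ t y -
        ∑ j, D t i j * fderiv ℝ (fun z => ρ t z) y (Pi.single j 1))
      = fun y => (A t i ⬝ᵥ y + e t i) * ρ t y
          + ((D t * (Sig t)⁻¹) i ⬝ᵥ (y - μ t)) * ρ t y := by
    intro i
    funext y
    have h1 : (A t *ᵥ y + e t) i = A t i ⬝ᵥ y + e t i := rfl
    have h2 : ∑ j, D t i j * fderiv ℝ (fun z => ρ t z) y (Pi.single j 1)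
        = -(((D t * (Sig t)⁻¹) i ⬝ᵥ (y - μ t)) * ρ t y) := by
      simp only [hfd]
      rw [← hrowdot]
      simp only [dotProduct, Finset.sum_mul, ← Finset.sum_neg_distrib]
      exact Finset.sum_congr rfl fun j _ => by ring
    rw [h1, h2]
    ring
  have hterm1 : ∀ i : Fin d, HasFDerivAt (fun y : Fin d → ℝ => A t i ⬝ᵥ y + e t i)
      (dpCLM (A t i)) x := fun i => (hasFDerivAt_dp (A t i) x).add_const (e t i)
  have hterm2 : ∀ i : Fin d, HasFDerivAt
      (fun y : Fin d → ℝ => (D t * (Sig t)⁻¹) i ⬝ᵥ (y - μ t))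
      (dpCLM ((D t * (Sig t)⁻¹) i)) x := by
    intro i
    have heq2 : (fun y : Fin d → ℝ => (D t * (Sig t)⁻¹) i ⬝ᵥ (y - μ t))
        = fun y => (D t * (Sig t)⁻¹) i ⬝ᵥ y - (D t * (Sig t)⁻¹) i ⬝ᵥ μ t := by
      funext y; rw [dotProduct_sub]
    rw [heq2]
    exact (hasFDerivAt_dp _ x).sub_const _
  have hsingle : ∀ (i : Fin d) (a : Fin d → ℝ), a ⬝ᵥ Pi.single i 1 = a i := by
    intro i a; simp [dotProduct, Pi.single_apply]
  have hFderiv : ∀ i : Fin d, fderiv ℝ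
      (fun y => ((A t *ᵥ y + e t) i) * ρ t y -
        ∑ j, D t i j * fderiv ℝ (fun z => ρ t z) y (Pi.single j 1)) x (Pi.single i 1)
      = ((A t i ⬝ᵥ x + e t i) * (-(ρ t x * (((Sig t)⁻¹ *ᵥ (x - μ t)) i)))
          + ρ t x * A t i i)
        + (((D t * (Sig t)⁻¹) i ⬝ᵥ (x - μ t)) * (-(ρ t x * (((Sig t)⁻¹ *ᵥ (x - μ t)) i)))
          + ρ t x * (D t * (Sig t)⁻¹) i i) := by
    intro i
    rw [hFi_eq i]
    have hH : HasFDerivAt (fun y => (A t i ⬝ᵥ y + e t i) * ρ t y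
        + ((D t * (Sig t)⁻¹) i ⬝ᵥ (y - μ t)) * ρ t y)
        (((A t i ⬝ᵥ x + e t i) • ((-(ρ t x)) • dpCLM ((Sig t)⁻¹ *ᵥ (x - μ t)))
            + ρ t x • dpCLM (A t i))
          + (((D t * (Sig t)⁻¹) i ⬝ᵥ (x - μ t)) •
              ((-(ρ t x)) • dpCLM ((Sig t)⁻¹ *ᵥ (x - μ t)))
            + ρ t x • dpCLM ((D t * (Sig t)⁻¹) i))) x :=
      ((hterm1 i).mul (hgrad x)).add ((hterm2 i).mul (hgrad x))
    rw [hH.fderiv]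
    simp only [ContinuousLinearMap.add_apply, ContinuousLinearMap.smul_apply,
      dpCLM_apply, smul_eq_mul, hsingle]
    ring
  have hsum1 : ∑ i, (A t i ⬝ᵥ x + e t i) * (-(ρ t x * (((Sig t)⁻¹ *ᵥ (x - μ t)) i)))
      = -(ρ t x * (((Sig t)⁻¹ *ᵥ (x - μ t)) ⬝ᵥ (A t *ᵥ x + e t))) := by
    rw [dotProduct, Finset.mul_sum, ← Finset.sum_neg_distrib]
    refine Finset.sum_congr rfl fun i _ => ?_
    have h3 : (A t *ᵥ x + e t) i = A t i ⬝ᵥ x + e t i := rfl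
    rw [h3]; ring
  have hsum2 : ∑ i, ((D t * (Sig t)⁻¹) i ⬝ᵥ (x - μ t))
        * (-(ρ t x * (((Sig t)⁻¹ *ᵥ (x - μ t)) i)))
      = -(ρ t x * (((Sig t)⁻¹ *ᵥ (x - μ t)) ⬝ᵥ
          (D t *ᵥ ((Sig t)⁻¹ *ᵥ (x - μ t))))) := by
    rw [dotProduct, Finset.mul_sum, ← Finset.sum_neg_distrib]
    refine Finset.sum_congr rfl fun i _ => ?_
    have h3 : (D t * (Sig t)⁻¹) i ⬝ᵥ (x - μ t)
        = (D t *ᵥ ((Sig t)⁻¹ *ᵥ (x - μ t))) i := by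
      rw [← hrowdot]; rfl
    rw [h3]; ring
  have hsum3 : ∑ i, ρ t x * A t i i = ρ t x * (A t).trace := by
    rw [Matrix.trace, ← Finset.mul_sum]; rfl
  have hsum4 : ∑ i, ρ t x * (D t * (Sig t)⁻¹) i i
      = ρ t x * (D t * (Sig t)⁻¹).trace := by
    rw [Matrix.trace, ← Finset.mul_sum]; rfl
  have hdivsum : ∑ i, fderiv ℝ
      (fun y => ((A t *ᵥ y + e t) i) * ρ t y -
        ∑ j, D t i j * fderiv ℝ (fun z => ρ t z) y (Pi.single j 1)) x (Pi.single i 1)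
      = -(ρ t x * (((Sig t)⁻¹ *ᵥ (x - μ t)) ⬝ᵥ (A t *ᵥ x + e t)))
        + -(ρ t x * (((Sig t)⁻¹ *ᵥ (x - μ t)) ⬝ᵥ (D t *ᵥ ((Sig t)⁻¹ *ᵥ (x - μ t)))))
        + ρ t x * (A t).trace + ρ t x * (D t * (Sig t)⁻¹).trace := by
    simp only [hFderiv, Finset.sum_add_distrib]
    rw [hsum1, hsum2, hsum3, hsum4]
    ring
  -- time derivative
  have hdetD : HasDerivAt (fun s => (Sig s).det)
      (((A t * Sig t + Sig t * (A t)ᵀ + 2 • D t + Sig t * Γ t * Sig t)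
        * (Sig t).adjugate).trace) t :=
    hasDerivAt_matrix_det (hSig t)
  have hadj : (Sig t).adjugate = (Sig t).det • (Sig t)⁻¹ := by
    rw [Matrix.inv_def, Ring.inverse_eq_inv, smul_smul,
      mul_inv_cancel₀ (hdetpos t).ne', one_smul]
  have htr : ((A t * Sig t + Sig t * (A t)ᵀ + 2 • D t + Sig t * Γ t * Sig t)
        * (Sig t).adjugate).trace
      = (Sig t).det * (((A t * Sig t + Sig t * (A t)ᵀ + 2 • D t
          + Sig t * Γ t * Sig t) * (Sig t)⁻¹).trace) := by
    rw [hadj, Matrix.mul_smul, Matrix.trace_smul, smul_eq_mul]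
  have hb0 : (0 : ℝ) < (2 * π) ^ (d : ℕ) := pow_pos (by positivity) d
  have hbpos : 0 < (2 * π) ^ (d : ℕ) * (Sig t).det := mul_pos hb0 (hdetpos t)
  have hbase : HasDerivAt (fun s => (2 * π) ^ (d : ℕ) * (Sig s).det)
      ((2 * π) ^ (d : ℕ) * ((A t * Sig t + Sig t * (A t)ᵀ + 2 • D t
        + Sig t * Γ t * Sig t) * (Sig t).adjugate).trace) t :=
    hdetD.const_mul _
  have hψ : HasDerivAt
      (fun s => ((2 * π) ^ (d : ℕ) * (Sig s).det) ^ (-(1 : ℝ) / 2))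
      (((2 * π) ^ (d : ℕ) * ((A t * Sig t + Sig t * (A t)ᵀ + 2 • D t
          + Sig t * Γ t * Sig t) * (Sig t).adjugate).trace)
        * (-(1 : ℝ) / 2)
        * ((2 * π) ^ (d : ℕ) * (Sig t).det) ^ (-(1 : ℝ) / 2 - 1)) t :=
    hbase.rpow_const (Or.inl hbpos.ne')
  have hψval : ((2 * π) ^ (d : ℕ) * ((A t * Sig t + Sig t * (A t)ᵀ + 2 • D t
          + Sig t * Γ t * Sig t) * (Sig t).adjugate).trace)
        * (-(1 : ℝ) / 2)
        * ((2 * π) ^ (d : ℕ) * (Sig t).det) ^ (-(1 : ℝ) / 2 - 1)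
      = -(1 / 2) * (((A t * Sig t + Sig t * (A t)ᵀ + 2 • D t
          + Sig t * Γ t * Sig t) * (Sig t)⁻¹).trace)
        * ((2 * π) ^ (d : ℕ) * (Sig t).det) ^ (-(1 : ℝ) / 2) := by
    rw [htr, Real.rpow_sub_one hbpos.ne']
    field_simp
    rw [mul_div_cancel_left₀ _ (hdetpos t).ne']
  have hw : HasDerivAt (fun s => x - μ s)
      (-((A t + Sig t * Γ t) *ᵥ μ t + Sig t *ᵥ c t + e t)) t :=
    (hμ t).const_sub x
  have hPm : HasDerivAt (fun s => (Sig s)⁻¹)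
      (-((Sig t)⁻¹ * (A t * Sig t + Sig t * (A t)ᵀ + 2 • D t
        + Sig t * Γ t * Sig t) * (Sig t)⁻¹)) t :=
    hasDerivAt_matrix_inv (hSig t) hdetu
  have hqd : HasDerivAt
      (fun s => (x - μ s) ⬝ᵥ ((Sig s)⁻¹ *ᵥ (x - μ s)))
      ((-((A t + Sig t * Γ t) *ᵥ μ t + Sig t *ᵥ c t + e t))
          ⬝ᵥ ((Sig t)⁻¹ *ᵥ (x - μ t))
        + (x - μ t) ⬝ᵥ ((-((Sig t)⁻¹ * (A t * Sig t + Sig t * (A t)ᵀ + 2 • D t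
            + Sig t * Γ t * Sig t) * (Sig t)⁻¹)) *ᵥ (x - μ t))
        + (x - μ t) ⬝ᵥ ((Sig t)⁻¹ *ᵥ
            (-((A t + Sig t * Γ t) *ᵥ μ t + Sig t *ᵥ c t + e t)))) t :=
    hasDerivAt_quadform_time hw hPm
  have hE : HasDerivAt
      (fun s => Real.exp (-(1 / 2) * ((x - μ s) ⬝ᵥ ((Sig s)⁻¹ *ᵥ (x - μ s)))))
      (Real.exp (-(1 / 2) * ((x - μ t) ⬝ᵥ ((Sig t)⁻¹ *ᵥ (x - μ t))))
        * (-(1 / 2) * ((-((A t + Sig t * Γ t) *ᵥ μ t + Sig t *ᵥ c t + e t))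
            ⬝ᵥ ((Sig t)⁻¹ *ᵥ (x - μ t))
          + (x - μ t) ⬝ᵥ ((-((Sig t)⁻¹ * (A t * Sig t + Sig t * (A t)ᵀ + 2 • D t
              + Sig t * Γ t * Sig t) * (Sig t)⁻¹)) *ᵥ (x - μ t))
          + (x - μ t) ⬝ᵥ ((Sig t)⁻¹ *ᵥ
              (-((A t + Sig t * Γ t) *ᵥ μ t + Sig t *ᵥ c t + e t)))))) t :=
    (hqd.const_mul (-(1 / 2) : ℝ)).exp
  have hρs : (fun s => ρ s x) = fun s =>
      m s * ((2 * π) ^ (d : ℕ) * (Sig s).det) ^ (-(1 : ℝ) / 2) *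
        Real.exp (-(1 / 2) * ((x - μ s) ⬝ᵥ ((Sig s)⁻¹ *ᵥ (x - μ s)))) :=
    funext fun s => hρ s x
  have hDERIV := ((hmo t).fun_mul hψ).fun_mul hE
  have hxv : x = μ t + (x - μ t) := by abel
  have CI := core_identity (A t) (D t) (Γ t) (Sig t) ((Sig t)⁻¹)
    (μ t) (c t) (e t) (b t) (x - μ t) ((Sig t)⁻¹ *ᵥ (x - μ t)) x
    (hSsym t) (hΓsymm t).eq hPsymm hSP hPS rfl hxv
  rw [hρs, hDERIV.deriv, hdivsum, hρ t x, hψval]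
  linear_combination (m t * ((2 * π) ^ (d : ℕ) * (Sig t).det) ^ (-(1 : ℝ) / 2)
    * Real.exp (-(1 / 2) * ((x - μ t) ⬝ᵥ ((Sig t)⁻¹ *ᵥ (x - μ t))))) * CI
end
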